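/- arXiv:1012.3504 — 7 statements merged into one kernel-verified Lean document; each statement's English description precedes it below -/
import Mathlib

section
/- For any connected graph G on n vertices, the rainbow vertex-connection number satisfies rvc(G) ≤ n − 2. -/
open SimpleGraph

/-- A coloring `c` is a rainbow vertex-coloring witness with `k` colors: any two vertices are
joined by a path whose internal vertices have distinct colors, all among the first `k` colors. -/
def IsRainbowVColoring {V : Type*} (G : SimpleGraph V) (c : V → ℕ) (k : ℕ) : Prop :=
  ∀ u v : V, ∃ p : G.Walk u v, p.IsPath ∧ (p.support.tail.dropLast.map c).Nodup ∧
    ∀ w ∈ p.support.tail.dropLast, c w < k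

/-- The rainbow vertex-connection number. -/
noncomputable def rvc {V : Type*} (G : SimpleGraph V) : ℕ :=
  sInf {k : ℕ | ∃ c : V → ℕ, IsRainbowVColoring G c k}

/-! Take a spanning tree `T` of `G`; as `n ≥ 2`, it has two distinct leaves `a` and `b`. A path of
`T` never passes through a leaf except at its ends, so giving the `n - 2` vertices other than `a`
and `b` pairwise distinct colors makes the tree paths rainbow. -/

open Finset

namespace SimpleGraph

variable {V : Type*} {G : SimpleGraph V}

lemma Walk.IsPath.ne_of_mem_support_tail_dropLast {u v w : V} {p : G.Walk u v} (hp : p.IsPath)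
    (hw : w ∈ p.support.tail.dropLast) : w ≠ u ∧ w ≠ v := by
  have hnd := hp.support_nodup
  rw [← p.cons_tail_support, List.nodup_cons] at hnd
  have htail := List.mem_of_mem_dropLast hw
  refine ⟨fun h => hnd.1 (h ▸ htail), ?_⟩
  rintro rfl
  have hne : p.support.tail ≠ [] := List.ne_nil_of_mem htail
  have hlast : p.support.tail.getLast hne = w := by
    rw [List.getLast_tail]
    exact p.getLast_support
  have htail_nd := hnd.2
  rw [← List.dropLast_append_getLast hne, hlast, List.nodup_append] at htail_nd
  exact htail_nd.2.2 w hw w (List.mem_singleton_self w) rfl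

lemma Walk.IsPath.degree_ne_one_of_mem_support_tail_dropLast {u v w : V} {p : G.Walk u v}
    [Fintype (G.neighborSet w)] (hp : p.IsPath) (hw : w ∈ p.support.tail.dropLast) :
    G.degree w ≠ 1 := by
  intro hdeg
  obtain ⟨_, _, huniq⟩ := degree_eq_one_iff_existsUnique_adj.1 hdeg
  obtain ⟨hwu, hwv⟩ := hp.ne_of_mem_support_tail_dropLast hw
  exact hp.isTrail.not_mem_support_of_subsingleton_neighborSet hwu hwv
    (fun x hx y hy => (huniq x hx).trans (huniq y hy).symm)
    (List.mem_of_mem_tail (List.mem_of_mem_dropLast hw))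

lemma rvc_le_card_of_forall_exists_isPath (S : Finset V)
    (hS : ∀ u v : V, ∃ p : G.Walk u v, p.IsPath ∧ ∀ w ∈ p.support.tail.dropLast, w ∈ S) :
    rvc G ≤ #S := by
  classical
  let c : V → ℕ := fun v => if hv : v ∈ S then S.equivFin ⟨v, hv⟩ else 0
  have hc : ∀ v (hv : v ∈ S), c v = S.equivFin ⟨v, hv⟩ := fun v hv => dif_pos hv
  refine Nat.sInf_le ⟨c, fun u v => ?_⟩
  obtain ⟨p, hp, hpS⟩ := hS u v
  refine ⟨p, hp, ?_, fun w hw => (hc w (hpS w hw)).symm ▸ Fin.isLt _⟩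
  have hnd : p.support.tail.dropLast.Nodup :=
    hp.support_nodup.sublist ((List.dropLast_sublist _).trans (List.tail_sublist _))
  refine hnd.map_on fun x hx y hy hxy => ?_
  rw [hc x (hpS x hx), hc y (hpS y hy), Fin.val_inj, Equiv.apply_eq_iff_eq] at hxy
  exact congrArg Subtype.val hxy

end SimpleGraph

theorem stmt_0 {V : Type*} [Fintype V] (G : SimpleGraph V) (hG : G.Connected)
    (hn : 2 ≤ Fintype.card V) :
    rvc G ≤ Fintype.card V - 2 := by
  classical
  have : Nontrivial V := Fintype.one_lt_card_iff_nontrivial.1 hn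
  obtain ⟨T, hTG, hT⟩ := hG.exists_isTree_le
  obtain ⟨a, b, hab, ha, hb⟩ := hT.exists_ne_and_degree_eq_one
  calc rvc G ≤ #({a, b}ᶜ : Finset V) := rvc_le_card_of_forall_exists_isPath _ fun u v => ?_
    _ = Fintype.card V - 2 := by rw [card_compl, card_pair hab]
  obtain ⟨p, hp⟩ := hT.connected.preconnected.exists_isPath u v
  refine ⟨p.mapLe hTG, hp.mapLe hTG, fun w hw => ?_⟩
  rw [Walk.support_mapLe_eq_support] at hw
  have hdeg := hp.degree_ne_one_of_mem_support_tail_dropLast hw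
  simp only [mem_compl, mem_insert, mem_singleton, not_or]
  exact ⟨fun h => hdeg (h ▸ ha), fun h => hdeg (h ▸ hb)⟩
end

section
/- If a connected graph G on n vertices has a spanning tree with at least m leaves, then rvc(G) ≤ n − m. -/
open SimpleGraph

lemma two_nbrs {V : Type*} {T : SimpleGraph V} {u v : V} (p : T.Walk u v) (hp : p.IsPath) :
    ∀ w ∈ p.support.tail.dropLast, ∃ a b, a ≠ b ∧ T.Adj w a ∧ T.Adj w b := by
  induction p with
  | nil => simp
  | @cons u x v h q ih =>
    cases q with
    | nil => simp
    | @cons x' c v h' q' =>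
      intro w hw
      rw [Walk.support_cons, List.tail_cons, Walk.support_cons,
        List.dropLast_cons_of_ne_nil (Walk.support_ne_nil _)] at hw
      rw [List.mem_cons] at hw
      rcases hw with rfl | hw
      · obtain ⟨hp', hu⟩ := (Walk.cons_isPath_iff _ _).mp hp
        refine ⟨u, c, fun hc => ?_, h.symm, h'⟩
        subst hc
        exact hu (by simp [Walk.support_cons, Walk.start_mem_support])
      · exact ih hp.of_cons w (by simpa using hw)

theorem stmt_4 {V : Type*} [Fintype V] (G : SimpleGraph V) (hG : G.Connected)
    (m : ℕ) (T : SimpleGraph V) (hTG : T ≤ G) (hTconn : T.Connected) (hTac : T.IsAcyclic)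
    (hleaves : m ≤ {v : V | (T.neighborSet v).ncard = 1}.ncard) :
    rvc G ≤ Fintype.card V - m := by
  classical
  set L : Finset V := {v : V | (T.neighborSet v).ncard = 1}.toFinset with hL
  set S : Finset V := Lᶜ with hS
  have hmL : m ≤ L.card := by
    rwa [hL, ← Set.ncard_eq_toFinset_card']
  have hScard : S.card ≤ Fintype.card V - m := by
    rw [hS, Finset.card_compl]
    exact Nat.sub_le_sub_left hmL _
  let e := S.equivFin
  let c : V → ℕ := fun v => if h : v ∈ S then (e ⟨v, h⟩ : ℕ) else 0
  have hmemS : ∀ {u v : V} (p : T.Walk u v), p.IsPath →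
      ∀ w ∈ p.support.tail.dropLast, w ∈ S := by
    intro u v p hp w hw
    obtain ⟨a, b, hab, ha, hb⟩ := two_nbrs p hp w hw
    rw [hS, Finset.mem_compl, hL, Set.mem_toFinset]
    intro hone
    obtain ⟨x, hx⟩ := Set.ncard_eq_one.mp hone
    have h1 : a ∈ T.neighborSet w := ha
    have h2 : b ∈ T.neighborSet w := hb
    rw [hx, Set.mem_singleton_iff] at h1 h2
    exact hab (h1.trans h2.symm)
  have hrvc : IsRainbowVColoring G c (Fintype.card V - m) := by
    intro u v
    let P : T.Path u v := (hTconn.preconnected u v).some.toPath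
    refine ⟨P.1.mapLe hTG, P.2.mapLe hTG, ?_⟩
    have hsup : (P.1.mapLe hTG).support = P.1.support := by
      simp only [Walk.mapLe, Walk.support_map]
      exact List.map_congr_left (fun x _ => rfl) |>.trans (List.map_id _)
    rw [hsup]
    constructor
    · refine List.Nodup.map_on ?_ ?_
      · intro x hx y hy hxy
        have hxS := hmemS P.1 P.2 x hx
        have hyS := hmemS P.1 P.2 y hy
        simp only [c, dif_pos hxS, dif_pos hyS] at hxy
        have := e.injective (Fin.val_injective hxy)
        exact congrArg Subtype.val this
      · exact ((P.2.support_nodup.sublist (List.tail_sublist _)).sublist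
          (List.dropLast_sublist _))
    · intro w hw
      have hwS := hmemS P.1 P.2 w hw
      calc c w = (e ⟨w, hwS⟩ : ℕ) := by simp [c, dif_pos hwS]
        _ < S.card := (e ⟨w, hwS⟩).2
        _ ≤ _ := hScard
  exact Nat.sInf_le ⟨c, hrvc⟩
end

section
/- If G is a connected graph on n vertices with minimum degree δ, then G has a connected spanning subgraph with minimum degree δ and with fewer than n(δ + 1/(δ+1)) edges. -/
open SimpleGraph

/-!
Take a subgraph `H₀ ≤ G` that is minimal among those of minimum degree at least `δ`. Each edge
of `H₀` has an endpoint of degree exactly `δ` (otherwise it could be deleted), so the vertices of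
degree `δ` cover the edges and `H₀` has at most `n δ` edges. Every component of `H₀` contains a
vertex and its `≥ δ` neighbours, so there are `c ≤ n / (δ + 1)` components, and since `G` is
connected, `c - 1` edges of `G` join them up. The result has at most `n δ + c - 1 < n (δ + 1/(δ+1))`
edges.
-/

namespace SimpleGraph

variable {V : Type*}

lemma Preconnected.exists_adj_not_reachable {G H : SimpleGraph V} (hG : G.Preconnected)
    (hH : ¬ H.Preconnected) : ∃ u v, G.Adj u v ∧ ¬ H.Reachable u v := by
  obtain ⟨a, b, hab⟩ : ∃ a b, ¬ H.Reachable a b := by simpa [Preconnected] using hH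
  obtain ⟨d, -, hd₁, hd₂⟩ :=
    (hG a b).some.exists_boundary_dart {x | H.Reachable a x} (Reachable.refl a) hab
  exact ⟨d.fst, d.snd, d.adj, fun h => hd₂ (Reachable.trans hd₁ h)⟩

lemma ncard_edgeSet_sup_edge_le [Finite V] (G : SimpleGraph V) (u v : V) :
    (G ⊔ edge u v).edgeSet.ncard ≤ G.edgeSet.ncard + 1 := by
  rw [edgeSet_sup]
  calc _ ≤ G.edgeSet.ncard + (edge u v).edgeSet.ncard := Set.ncard_union_le _ _
    _ ≤ G.edgeSet.ncard + 1 := by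
      gcongr
      exact (Set.ncard_le_ncard edgeSet_edge_subset).trans (Set.ncard_singleton _).le

lemma card_connectedComponent_sup_edge_lt [Finite V] {G : SimpleGraph V} {u v : V}
    (huv : ¬ G.Reachable u v) :
    Nat.card (G ⊔ edge u v).ConnectedComponent < Nat.card G.ConnectedComponent := by
  set f := ConnectedComponent.map (Hom.ofLE (le_sup_left : G ≤ G ⊔ edge u v))
  have hadj : (G ⊔ edge u v).Adj u v :=
    Or.inr ((edge_adj u v u v).mpr ⟨Or.inl ⟨rfl, rfl⟩, fun h => huv (h ▸ Reachable.refl u)⟩)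
  have hf : ¬ Function.Injective f := fun hinj =>
    huv (ConnectedComponent.eq.mp (hinj (ConnectedComponent.sound hadj.reachable)))
  refine (ConnectedComponent.card_le_card_of_le le_sup_left).lt_of_ne fun h => hf ?_
  exact ((Nat.bijective_iff_surjective_and_card f).mpr
    ⟨ConnectedComponent.surjective_map_ofLE _, h.symm⟩).1

theorem Connected.exists_connected_between [Finite V] {G H : SimpleGraph V} (hG : G.Connected)
    (hHG : H ≤ G) : ∃ H', H ≤ H' ∧ H' ≤ G ∧ H'.Connected ∧
      H'.edgeSet.ncard + 1 ≤ H.edgeSet.ncard + Nat.card H.ConnectedComponent := by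
  have := hG.nonempty
  induction hc : Nat.card H.ConnectedComponent using Nat.strong_induction_on generalizing H with
  | _ c ih =>
  by_cases hH : H.Connected
  · exact ⟨H, le_rfl, hHG, hH, by have := Nat.card_pos (α := H.ConnectedComponent); omega⟩
  obtain ⟨u, v, huv, hnr⟩ := hG.preconnected.exists_adj_not_reachable fun h => hH ⟨h⟩
  have hlt := card_connectedComponent_sup_edge_lt hnr
  obtain ⟨H', hle, hH'G, hH', hcard⟩ :=
    ih _ (hc ▸ hlt) (sup_le hHG ((edge_le_iff G).mpr (Or.inr huv))) rfl
  have := ncard_edgeSet_sup_edge_le H u v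
  exact ⟨H', le_sup_left.trans hle, hH'G, hH', by omega⟩

lemma ncard_neighborSet_le_ncard_neighborSet_deleteEdges_add_one [Finite V] (H : SimpleGraph V)
    (e : Sym2 V) (w : V) :
    (H.neighborSet w).ncard ≤ ((H.deleteEdges {e}).neighborSet w).ncard + 1 := by
  have hsub : H.neighborSet w ⊆ (H.deleteEdges {e}).neighborSet w ∪ {x | s(w, x) = e} :=
    fun x hx => or_iff_not_imp_right.mpr fun h => deleteEdges_adj.mpr ⟨hx, h⟩
  have hone : {x | s(w, x) = e}.ncard ≤ 1 :=
    (Set.ncard_le_one_iff).mpr fun hx hy => Sym2.congr_right.mp (hx.trans hy.symm)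
  calc (H.neighborSet w).ncard
      ≤ ((H.deleteEdges {e}).neighborSet w ∪ {x | s(w, x) = e}).ncard := Set.ncard_le_ncard hsub
    _ ≤ _ := (Set.ncard_union_le _ _).trans (by omega)

lemma neighborSet_deleteEdges_of_notMem {w : V} {e : Sym2 V} (hw : w ∉ e)
    (H : SimpleGraph V) : (H.deleteEdges {e}).neighborSet w = H.neighborSet w := by
  ext x
  simp only [mem_neighborSet, deleteEdges_adj, Set.mem_singleton_iff, and_iff_left_iff_imp]
  exact fun _ h => hw (h ▸ Sym2.mem_mk_left w x)

lemma isVertexCover_of_minimal_minDegree [Finite V] {H : SimpleGraph V} {δ : ℕ}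
    (hH : Minimal (fun H : SimpleGraph V => ∀ v, δ ≤ (H.neighborSet v).ncard) H) :
    H.IsVertexCover {v | (H.neighborSet v).ncard = δ} := by
  intro u v huv
  by_contra! hne
  have hdel : H.deleteEdges {s(u, v)} < H :=
    lt_of_le_not_ge (deleteEdges_le _) fun h => (deleteEdges_adj.mp (h huv)).2 rfl
  refine hH.not_prop_of_lt hdel fun w => ?_
  by_cases hw : w ∈ s(u, v)
  · have hlt : δ < (H.neighborSet w).ncard := by
      rcases Sym2.mem_iff.mp hw with rfl | rfl
      exacts [(hH.prop w).lt_of_ne' hne.1, (hH.prop w).lt_of_ne' hne.2]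
    have := ncard_neighborSet_le_ncard_neighborSet_deleteEdges_add_one H s(u, v) w
    omega
  · rw [neighborSet_deleteEdges_of_notMem hw]
    exact hH.prop w

lemma ncard_incidenceSet (G : SimpleGraph V) (v : V) :
    (G.incidenceSet v).ncard = (G.neighborSet v).ncard := by
  classical exact Set.ncard_congr' (G.incidenceSetEquivNeighborSet v)

lemma IsVertexCover.ncard_edgeSet_le [Finite V] {H : SimpleGraph V} {s : Set V} {d : ℕ}
    (hs : H.IsVertexCover s) (hd : ∀ v ∈ s, (H.neighborSet v).ncard ≤ d) :
    H.edgeSet.ncard ≤ s.ncard * d := by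
  classical
  set t := s.toFinite.toFinset
  have hsub : H.edgeSet ⊆ ⋃ v ∈ t, H.incidenceSet v := by
    intro e he
    induction e using Sym2.ind with | _ u w
    simp only [Set.mem_iUnion, Set.Finite.mem_toFinset, t]
    rcases hs he with hu | hw
    exacts [⟨u, hu, he, Sym2.mem_mk_left u w⟩, ⟨w, hw, he, Sym2.mem_mk_right u w⟩]
  calc H.edgeSet.ncard ≤ (⋃ v ∈ t, H.incidenceSet v).ncard := Set.ncard_le_ncard hsub
    _ ≤ ∑ v ∈ t, (H.incidenceSet v).ncard := t.set_ncard_biUnion_le _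
    _ ≤ ∑ _v ∈ t, d := Finset.sum_le_sum fun v hv =>
        (ncard_incidenceSet H v).trans_le (hd v (by simpa [t] using hv))
    _ = s.ncard * d := by rw [Finset.sum_const, smul_eq_mul, Set.ncard_eq_toFinset_card]

lemma ncard_neighborSet_lt_ncard_supp [Finite V] (H : SimpleGraph V) (v : V) :
    (H.neighborSet v).ncard < (H.connectedComponentMk v).supp.ncard := by
  have hsub : insert v (H.neighborSet v) ⊆ (H.connectedComponentMk v).supp := by
    rintro w (rfl | hw)
    · exact ConnectedComponent.connectedComponentMk_mem
    · exact ConnectedComponent.sound (Adj.reachable hw).symm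
  calc (H.neighborSet v).ncard < (H.neighborSet v).ncard + 1 := Nat.lt_succ_self _
    _ = (insert v (H.neighborSet v)).ncard :=
        (Set.ncard_insert_of_notMem H.notMem_neighborSet_self).symm
    _ ≤ _ := Set.ncard_le_ncard hsub

lemma card_connectedComponent_mul_le [Fintype V] {H : SimpleGraph V} {δ : ℕ}
    (hδ : ∀ v, δ ≤ (H.neighborSet v).ncard) :
    Nat.card H.ConnectedComponent * (δ + 1) ≤ Fintype.card V := by
  classical
  have hfiber (c : H.ConnectedComponent) :
      δ + 1 ≤ (Finset.univ.filter fun v => H.connectedComponentMk v = c).card := by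
    obtain ⟨v, rfl⟩ := c.exists_rep
    have := ncard_neighborSet_lt_ncard_supp H v
    rw [← Set.ncard_coe_finset, Finset.coe_filter_univ]
    exact (hδ v).trans_lt this
  rw [Nat.card_eq_fintype_card, mul_comm]
  exact Finset.mul_card_image_le_card_of_maps_to (fun _ _ => Finset.mem_univ _) _
    fun c _ => hfiber c

end SimpleGraph

theorem stmt_7 {V : Type*} [Fintype V] (G : SimpleGraph V) [DecidableRel G.Adj]
    (hG : G.Connected) (δ : ℕ) (hδ : G.minDegree = δ) :
    ∃ H : SimpleGraph V, H ≤ G ∧ H.Connected ∧ (∀ v : V, δ ≤ (H.neighborSet v).ncard) ∧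
      (H.edgeSet.ncard : ℝ) < (Fintype.card V : ℝ) * (δ + 1 / (δ + 1)) := by
  have hGδ (v : V) : δ ≤ (G.neighborSet v).ncard := by
    rw [Set.ncard_eq_toFinset_card', Set.toFinset_card, card_neighborSet_eq_degree, ← hδ]
    exact G.minDegree_le_degree v
  obtain ⟨H₀, hH₀G, hH₀⟩ := exists_minimal_le_of_wellFoundedLT
    (fun H : SimpleGraph V => ∀ v, δ ≤ (H.neighborSet v).ncard) G hGδ
  obtain ⟨H, hH₀H, hHG, hH, hedges⟩ := hG.exists_connected_between hH₀G
  refine ⟨H, hHG, hH, fun v => (hH₀.prop v).trans (Set.ncard_le_ncard fun _ hw => hH₀H hw), ?_⟩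
  have hE₀ : H₀.edgeSet.ncard ≤ Fintype.card V * δ :=
    ((isVertexCover_of_minimal_minDegree hH₀).ncard_edgeSet_le fun _ hv => hv.le).trans
      (Nat.mul_le_mul_right δ ((Set.ncard_le_card _).trans_eq Nat.card_eq_fintype_card))
  have hcomp := card_connectedComponent_mul_le hH₀.prop
  set c := Nat.card H₀.ConnectedComponent
  have hE : (H.edgeSet.ncard : ℝ) + 1 ≤ Fintype.card V * δ + c := by
    exact_mod_cast hedges.trans (Nat.add_le_add_right hE₀ c)
  have hc : (c : ℝ) ≤ Fintype.card V / (δ + 1) := by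
    rw [le_div_iff₀ (by positivity)]
    exact_mod_cast hcomp
  rw [mul_add, mul_one_div]
  linarith
end

section
/- If G is a graph of order n with minimum degree δ ≥ 2, then G has a connected δ/3-strong 2-step dominating set S with |S| ≤ 3n/(δ+1) − 2. -/
/-!
Grow a set `D` greedily, keeping `G[D]` connected and `(δ + 1) (|D| + 2) ≤ 3 |N[D]|`, where
`N[D]` is the closed neighbourhood of `D`. Adding a shortest path from `D` to a vertex `u` at
distance `k` costs at most `k` new vertices of `D` and gains every vertex of `N[u] \ N[D]`.
If `u` is at distance exactly `3`, then `N[u]` misses `N[D]`, so the gain is at least `δ + 1`;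
if `u` is at distance `2` and has `c < δ / 3` neighbours in `N(D)`, the gain is at least
`δ + 1 - c ≥ 2 (δ + 1) / 3`. In both cases the invariant survives, so a largest such `D` is a
connected `δ/3`-strong 2-step dominating set, and `|N[D]| ≤ n` gives the size bound.
-/

open SimpleGraph

namespace SimpleGraph

variable {V : Type*} (G : SimpleGraph V)

def closedNbhd (D : Set V) : Set V := ⋃ s ∈ D, insert s (G.neighborSet s)

variable {G}

lemma closedNbhd_mono {D D' : Set V} (h : D ⊆ D') : G.closedNbhd D ⊆ G.closedNbhd D' :=
  Set.biUnion_subset_biUnion_left h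

lemma insert_neighborSet_subset_closedNbhd {D : Set V} {v : V} (hv : v ∈ D) :
    insert v (G.neighborSet v) ⊆ G.closedNbhd D :=
  Set.subset_biUnion_of_mem (u := fun s => insert s (G.neighborSet s)) hv

lemma dist_le_one_of_mem_insert_neighborSet {s w : V} (hw : w ∈ insert s (G.neighborSet s)) :
    G.dist s w ≤ 1 := by
  rcases hw with rfl | hw
  · simp
  · exact (dist_eq_one_iff_adj.mpr hw).le

lemma ncard_insert_neighborSet [Fintype V] [DecidableRel G.Adj] (v : V) :
    (insert v (G.neighborSet v)).ncard = G.degree v + 1 := by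
  rw [Set.ncard_insert_of_notMem G.notMem_neighborSet_self, Set.ncard_eq_toFinset_card',
    Set.toFinset_card, card_neighborSet_eq_degree]

lemma Connected.disjoint_closedNbhd_of_three_le_dist (hG : G.Connected) {D : Set V} {u : V}
    (hu : ∀ s ∈ D, 3 ≤ G.dist s u) :
    Disjoint (insert u (G.neighborSet u)) (G.closedNbhd D) := by
  refine Set.disjoint_left.mpr fun w hwu hwD => ?_
  obtain ⟨s, hs, hws⟩ := Set.mem_iUnion₂.mp hwD
  have hsw := dist_le_one_of_mem_insert_neighborSet hws
  have huw := dist_le_one_of_mem_insert_neighborSet hwu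
  have := hG.dist_triangle (u := s) (v := w) (w := u)
  have := hu s hs
  rw [dist_comm] at huw
  omega

lemma inter_closedNbhd_subset_of_two_le_dist {D : Set V} {u : V}
    (hu : ∀ s ∈ D, 2 ≤ G.dist s u) :
    insert u (G.neighborSet u) ∩ G.closedNbhd D ⊆
      {w | G.Adj u w ∧ ∃ s ∈ D, G.dist s w = 1} := by
  rintro w ⟨hwu, hwD⟩
  obtain ⟨s, hs, hws⟩ := Set.mem_iUnion₂.mp hwD
  have hsu := hu s hs
  rcases hwu with rfl | huw
  · have := dist_le_one_of_mem_insert_neighborSet hws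
    omega
  rcases hws with rfl | hsw
  · rw [dist_eq_one_iff_adj.mpr huw.symm] at hsu
    omega
  · exact ⟨huw, s, hs, dist_eq_one_iff_adj.mpr hsw⟩

lemma Connected.exists_dist_eq_of_le_dist (hG : G.Connected) {u v : V} {k : ℕ}
    (hk : k ≤ G.dist u v) : ∃ w, G.dist u w = k ∧ G.dist w v = G.dist u v - k := by
  obtain ⟨p, hp⟩ := hG.exists_walk_length_eq_dist u v
  refine ⟨p.getVert k, ?_⟩
  have h₁ : G.dist u (p.getVert k) ≤ k := (dist_le (p.take k)).trans (by simp)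
  have h₂ : G.dist (p.getVert k) v ≤ p.length - k := (dist_le (p.drop k)).trans (by simp)
  have := hG.dist_triangle (u := u) (v := p.getVert k) (w := v)
  omega

lemma Connected.exists_forall_le_dist_and_dist_eq (hG : G.Connected) {D : Set V}
    (hD : D.Finite) (hne : D.Nonempty) {k : ℕ} {v : V} (hv : ∀ s ∈ D, k ≤ G.dist s v) :
    ∃ u, (∀ s ∈ D, k ≤ G.dist s u) ∧ ∃ s ∈ D, G.dist s u = k := by
  -- `u` is the vertex `k` steps from a nearest `s₀ ∈ D` on a geodesic from `s₀` to `v`.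
  obtain ⟨s₀, hs₀, hmin⟩ := Set.exists_min_image D (G.dist · v) hD hne
  obtain ⟨u, hs₀u, huv⟩ := hG.exists_dist_eq_of_le_dist (hv s₀ hs₀)
  refine ⟨u, fun s hs => ?_, s₀, hs₀, hs₀u⟩
  have := hG.dist_triangle (u := s) (v := u) (w := v)
  have := hmin s hs
  have := hv s₀ hs₀
  omega

lemma exists_connected_induce_superset_of_walk {D : Set V} {s u : V} (p : G.Walk s u)
    (hD : (G.induce D).Connected) (hs : s ∈ D) :
    ∃ D', D ⊆ D' ∧ u ∈ D' ∧ D'.ncard ≤ D.ncard + p.length ∧ (G.induce D').Connected := by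
  induction p generalizing D with
  | nil => exact ⟨D, subset_rfl, hs, by simp, hD⟩
  | @cons s t u hst q ih =>
    have ht : (G.induce (D ∪ {t})).Connected :=
      connected_induce_union hD.preconnected (by simp) hs rfl hst
    obtain ⟨D', hDD', huD', hcard, hconn⟩ := ih ht (by simp)
    refine ⟨D', Set.subset_union_left.trans hDD', huD', ?_, hconn⟩
    have := Set.ncard_union_le D {t}
    simp only [Set.ncard_singleton, Walk.length_cons] at this ⊢
    omega

variable (G) in
structure IsExpandingSet (δ : ℕ) (D : Set V) : Prop where
  connected : (G.induce D).Connected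
  card_le : (δ + 1) * (D.ncard + 2) ≤ 3 * (G.closedNbhd D).ncard

section Expanding

variable {δ : ℕ}

lemma isExpandingSet_singleton [Fintype V] [DecidableRel G.Adj] (hdeg : ∀ v, δ ≤ G.degree v)
    (v : V) : G.IsExpandingSet δ {v} where
  connected := by simp
  card_le := by
    have := Set.ncard_le_ncard
      (insert_neighborSet_subset_closedNbhd (G := G) (Set.mem_singleton v))
    rw [ncard_insert_neighborSet] at this
    have := hdeg v
    rw [Set.ncard_singleton]
    omega

lemma IsExpandingSet.exists_ncard_lt [Finite V] (hG : G.Connected) {D : Set V}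
    (hD : G.IsExpandingSet δ D) {s u : V} (hs : s ∈ D) (hu : u ∉ D)
    (hgain : (δ + 1) * G.dist s u ≤ 3 * (insert u (G.neighborSet u) \ G.closedNbhd D).ncard) :
    ∃ D', G.IsExpandingSet δ D' ∧ D.ncard < D'.ncard := by
  obtain ⟨p, hp⟩ := hG.exists_walk_length_eq_dist s u
  obtain ⟨D', hDD', huD', hcard, hconn⟩ :=
    exists_connected_induce_superset_of_walk p hD.connected hs
  have hnbhd : (G.closedNbhd D).ncard + (insert u (G.neighborSet u) \ G.closedNbhd D).ncard ≤
      (G.closedNbhd D').ncard := by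
    rw [← Set.ncard_union_eq Set.disjoint_sdiff_right]
    exact Set.ncard_le_ncard (Set.union_subset (closedNbhd_mono hDD')
      (Set.sdiff_subset.trans (insert_neighborSet_subset_closedNbhd huD')))
  refine ⟨D', ⟨hconn, ?_⟩,
    Set.ncard_lt_ncard ((Set.ssubset_iff_of_subset hDD').mpr ⟨u, huD', hu⟩)⟩
  have := Nat.mul_le_mul_left (δ + 1) (Nat.add_le_add_right hcard 2)
  nlinarith [hD.card_le]

lemma IsExpandingSet.exists_ncard_lt_of_three_le_dist [Fintype V] [DecidableRel G.Adj]
    (hG : G.Connected) (hdeg : ∀ v, δ ≤ G.degree v) {D : Set V} (hD : G.IsExpandingSet δ D) {u : V}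
    (hu : ∀ s ∈ D, 3 ≤ G.dist s u) (hsu : ∃ s ∈ D, G.dist s u = 3) :
    ∃ D', G.IsExpandingSet δ D' ∧ D.ncard < D'.ncard := by
  obtain ⟨s, hs, hsu⟩ := hsu
  refine hD.exists_ncard_lt hG hs (fun huD => by simpa using hu u huD) ?_
  rw [(hG.disjoint_closedNbhd_of_three_le_dist hu).sdiff_eq_left, ncard_insert_neighborSet,
    hsu]
  have := hdeg u
  omega

lemma IsExpandingSet.exists_ncard_lt_of_few_neighbors [Fintype V] [DecidableRel G.Adj]
    (hG : G.Connected) (hdeg : ∀ v, δ ≤ G.degree v) {D : Set V} (hD : G.IsExpandingSet δ D)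
    {u : V} (hu : ∀ s ∈ D, 2 ≤ G.dist s u) (hsu : ∃ s ∈ D, G.dist s u = 2)
    (hfew : 3 * {w | G.Adj u w ∧ ∃ s ∈ D, G.dist s w = 1}.ncard < δ) :
    ∃ D', G.IsExpandingSet δ D' ∧ D.ncard < D'.ncard := by
  obtain ⟨s, hs, hsu⟩ := hsu
  refine hD.exists_ncard_lt hG hs (fun huD => by simpa using hu u huD) ?_
  have hinter := Set.ncard_le_ncard (inter_closedNbhd_subset_of_two_le_dist hu)
  have hsplit := Set.ncard_inter_add_ncard_sdiff_eq_ncard (insert u (G.neighborSet u))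
    (G.closedNbhd D)
  rw [ncard_insert_neighborSet] at hsplit
  have := hdeg u
  rw [hsu]
  omega

lemma IsExpandingSet.card_le_card [Fintype V] {D : Set V} (hD : G.IsExpandingSet δ D) :
    ((δ : ℝ) + 1) * (D.ncard + 2) ≤ 3 * Fintype.card V := by
  have := Set.ncard_le_card (G.closedNbhd D)
  rw [Nat.card_eq_fintype_card] at this
  exact_mod_cast hD.card_le.trans (by omega)

end Expanding

end SimpleGraph

theorem stmt_8_general {V : Type*} [Fintype V] (G : SimpleGraph V) [DecidableRel G.Adj]
    (hG : G.Connected) (δ : ℕ) (hδ : G.minDegree = δ) :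
    ∃ S : Set V,
      -- `S` is a 2-step dominating set
      (∀ v : V, v ∉ S → ∃ s ∈ S, G.dist s v ≤ 2) ∧
      -- `S` is `δ/3`-strong: every vertex at distance exactly 2 from `S` has at least `δ/3`
      -- neighbors at distance exactly 1 from `S`
      (∀ v : V, (∀ s ∈ S, 2 ≤ G.dist s v) → (∃ s ∈ S, G.dist s v = 2) →
        ((δ : ℝ) / 3 ≤ ({w : V | G.Adj v w ∧ ∃ s ∈ S, G.dist s w = 1}.ncard : ℝ))) ∧
      -- the subgraph induced by `S` is connected
      ((G.induce S).Connected) ∧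
      -- size bound
      ((S.ncard : ℝ) ≤ 3 * (Fintype.card V : ℝ) / (δ + 1) - 2) := by
  have hdeg : ∀ v, δ ≤ G.degree v := fun v => hδ ▸ G.minDegree_le_degree v
  obtain ⟨v₀⟩ := hG.nonempty
  obtain ⟨D, hD, hmax⟩ := Set.Finite.exists_maximalFor Set.ncard {D | G.IsExpandingSet δ D}
    (Set.toFinite _) ⟨{v₀}, isExpandingSet_singleton hdeg v₀⟩
  have hD_max : ∀ D', G.IsExpandingSet δ D' → ¬ D.ncard < D'.ncard := fun D' hD' hlt =>
    hlt.not_ge (hmax hD' hlt.le)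
  refine ⟨D, fun v _ => ?_, fun v hv hsv => ?_, hD.connected, ?_⟩
  · by_contra! hfar
    obtain ⟨u, hu, hsu⟩ := hG.exists_forall_le_dist_and_dist_eq (Set.toFinite D)
      (Set.nonempty_coe_sort.mp hD.connected.nonempty) hfar
    obtain ⟨D', hD', hlt⟩ := hD.exists_ncard_lt_of_three_le_dist hG hdeg hu hsu
    exact hD_max D' hD' hlt
  · rw [div_le_iff₀' three_pos]
    by_contra! hfew
    obtain ⟨D', hD', hlt⟩ :=
      hD.exists_ncard_lt_of_few_neighbors hG hdeg hv hsv (by exact_mod_cast hfew)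
    exact hD_max D' hD' hlt
  · rw [le_sub_iff_add_le, le_div_iff₀ (by positivity)]
    linarith [hD.card_le_card]

theorem stmt_8 {V : Type*} [Fintype V] (G : SimpleGraph V) [DecidableRel G.Adj]
    (hG : G.Connected) (δ : ℕ) (hδ : G.minDegree = δ) (hδ2 : 2 ≤ δ) :
    ∃ S : Set V,
      -- `S` is a 2-step dominating set
      (∀ v : V, v ∉ S → ∃ s ∈ S, G.dist s v ≤ 2) ∧
      -- `S` is `δ/3`-strong: every vertex at distance exactly 2 from `S` has at least `δ/3`
      -- neighbors at distance exactly 1 from `S`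
      (∀ v : V, (∀ s ∈ S, 2 ≤ G.dist s v) → (∃ s ∈ S, G.dist s v = 2) →
        ((δ : ℝ) / 3 ≤ ({w : V | G.Adj v w ∧ ∃ s ∈ S, G.dist s w = 1}.ncard : ℝ))) ∧
      -- the subgraph induced by `S` is connected
      ((G.induce S).Connected) ∧
      -- size bound
      ((S.ncard : ℝ) ≤ 3 * (Fintype.card V : ℝ) / (δ + 1) - 2) :=
  stmt_8_general G hG δ hδ
end

section
/- A connected graph G of order n with minimum degree δ satisfying 16 ≤ δ ≤ √(n−1) − 2 has rvc(G) ≤ 4n/(δ+1) + 5. -/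
open SimpleGraph

open Finset

/-!
Grow a set `D`, connected through a root, together with a packing `S ⊆ D` (vertices pairwise at
distance at least 3): while some vertex is at distance at least 3 from `D`, a walk to `D` yields
such a vertex `x` with a path `x a b d` into `D`; add `x, a, b` to `D` and `x` to `S`. In the end
`#D + 2 ≤ 3 #S` and every vertex is within distance 2 of `D`. Let `M` be a maximum packing in the
second layer. Color `D` injectively, a first-layer vertex by its neighbour in `M` (or a spare
color), and the second layer with two colors, one of them for `M`: that is
`#D + #M + 3 ≤ 3 #S + #M + 1` colors, and a packing has at most `n / (δ + 1)` vertices because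
closed neighbourhoods of its vertices are disjoint.

Two vertices are joined through `D` unless both lie in the second layer and all their
first-layer neighbours share one color. If one of them is linked to some `m ∈ M` through the
second layer, a rainbow walk goes through `m`; otherwise both can replace in `M` the at most one
vertex named by that color, contradicting the maximality of `M`.
-/

namespace SimpleGraph.Walk

variable {V : Type*} {G : SimpleGraph V} {u v w x : V}

def innerSupport (p : G.Walk u v) : List V := p.support.tail.dropLast

@[simp]
lemma innerSupport_nil : (nil : G.Walk u u).innerSupport = [] := rfl

lemma innerSupport_cons (h : G.Adj u v) (p : G.Walk v w) :
    (cons h p).innerSupport = p.support.dropLast := rfl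

lemma eq_or_mem_innerSupport_of_mem_dropLast (p : G.Walk u v) (hw : w ∈ p.support.dropLast) :
    w = u ∨ w ∈ p.innerSupport := by
  cases p with
  | nil => simp at hw
  | cons h q =>
    rw [support_cons, List.dropLast_cons_of_ne_nil q.support_ne_nil] at hw
    exact List.mem_cons.mp hw

lemma mem_innerSupport_cons (h : G.Adj u v) (p : G.Walk v w)
    (hx : x ∈ (cons h p).innerSupport) : x = v ∨ x ∈ p.innerSupport :=
  p.eq_or_mem_innerSupport_of_mem_dropLast hx

lemma mem_innerSupport_append (p : G.Walk u v) (q : G.Walk v w)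
    (hx : x ∈ (p.append q).innerSupport) :
    x ∈ p.innerSupport ∨ x = v ∨ x ∈ q.innerSupport := by
  cases p with
  | nil => exact Or.inr (Or.inr hx)
  | cons h p =>
    rw [cons_append, innerSupport_cons, support_append_eq_support_dropLast_append,
      List.dropLast_append_of_ne_nil q.support_ne_nil, List.mem_append] at hx
    rcases hx with hx | hx
    · exact Or.inl hx
    · exact Or.inr (q.eq_or_mem_innerSupport_of_mem_dropLast hx)

lemma innerSupport_reverse (p : G.Walk u v) :
    p.reverse.innerSupport = p.innerSupport.reverse := by
  rw [innerSupport, innerSupport, support_reverse, List.tail_reverse, List.dropLast_reverse,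
    List.tail_dropLast]

lemma mem_support_of_mem_innerSupport {p : G.Walk u v}
    (hw : w ∈ p.innerSupport) : w ∈ p.support :=
  List.mem_of_mem_tail (List.dropLast_subset _ hw)

lemma mem_innerSupport_of_mem_support {p : G.Walk u v} (hw : w ∈ p.support)
    (hu : w ≠ u) (hv : w ≠ v) : w ∈ p.innerSupport := by
  cases p with
  | nil => exact absurd (by simpa using hw) hu
  | cons h q =>
    rw [support_cons, List.mem_cons, ← q.dropLast_support_concat, List.mem_append,
      List.mem_singleton] at hw
    exact hw.resolve_left hu |>.resolve_right hv

lemma IsPath.ne_of_mem_innerSupport {p : G.Walk u v} (hp : p.IsPath)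
    (hw : w ∈ p.innerSupport) : w ≠ u ∧ w ≠ v := by
  cases p with
  | nil => simp at hw
  | cons h q =>
    rw [cons_isPath_iff] at hp
    rw [innerSupport_cons] at hw
    have hnd := hp.1.support_nodup
    rw [← q.dropLast_support_concat, List.nodup_append] at hnd
    refine ⟨fun hwu => hp.2 (hwu ▸ List.dropLast_subset _ hw), fun hwv => ?_⟩
    exact hnd.2.2 w hw v (List.mem_singleton_self v) hwv

lemma innerSupport_sublist_support (p : G.Walk u v) :
    p.innerSupport.Sublist p.support :=
  (List.dropLast_sublist _).trans (List.tail_sublist _)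

end SimpleGraph.Walk

namespace SimpleGraph

variable {V : Type*} (G : SimpleGraph V)

def Near (u v : V) : Prop := u = v ∨ G.Adj u v ∨ ∃ w, G.Adj u w ∧ G.Adj w v

def IsPacking (S : Finset V) : Prop := ∀ a ∈ S, ∀ b ∈ S, a ≠ b → ¬ G.Near a b

/-- Walks rather than paths, so that they can be concatenated freely; `Walk.bypass` turns them
into rainbow paths at the end. -/
def RainbowReachable (c : V → ℕ) (u v : V) : Prop :=
  ∃ p : G.Walk u v, Set.InjOn c {w | w ∈ p.innerSupport}

variable {G}

lemma Near.refl (u : V) : G.Near u u := Or.inl rfl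

lemma Near.symm {u v : V} (h : G.Near u v) : G.Near v u := by
  rcases h with rfl | h | ⟨w, h₁, h₂⟩
  · exact Near.refl u
  · exact Or.inr (Or.inl h.symm)
  · exact Or.inr (Or.inr ⟨w, h₂.symm, h₁.symm⟩)

lemma IsPacking.subset {S T : Finset V} (hS : G.IsPacking S) (hT : T ⊆ S) : G.IsPacking T :=
  fun a ha b hb => hS a (hT ha) b (hT hb)

lemma IsPacking.insert [DecidableEq V] {S : Finset V} {a : V} (hS : G.IsPacking S)
    (ha : ∀ b ∈ S, ¬ G.Near a b) : G.IsPacking (insert a S) := by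
  intro x hx y hy hxy
  rcases Finset.mem_insert.mp hx with rfl | hxS <;> rcases Finset.mem_insert.mp hy with rfl | hyS
  · exact absurd rfl hxy
  · exact ha y hyS
  · exact fun h => ha x hxS h.symm
  · exact hS x hxS y hyS hxy

lemma near_of_mem_neighborFinset_cons [Fintype V] [DecidableRel G.Adj] {a b z : V}
    {ha' : a ∉ G.neighborFinset a} {hb' : b ∉ G.neighborFinset b}
    (ha : z ∈ (G.neighborFinset a).cons a ha') (hb : z ∈ (G.neighborFinset b).cons b hb') :
    G.Near a b := by
  simp only [Finset.mem_cons, mem_neighborFinset] at ha hb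
  rcases ha with rfl | ha <;> rcases hb with rfl | hb
  · exact Near.refl z
  · exact Or.inr (Or.inl hb.symm)
  · exact Or.inr (Or.inl ha)
  · exact Or.inr (Or.inr ⟨z, ha, hb.symm⟩)

lemma IsPacking.card_mul_le [Fintype V] [DecidableRel G.Adj] {S : Finset V}
    (hS : G.IsPacking S) : #S * (G.minDegree + 1) ≤ Fintype.card V := by
  classical
  let N (v : V) : Finset V := (G.neighborFinset v).cons v (by simp)
  have hdisj : (S : Set V).PairwiseDisjoint N :=
    fun a ha b hb hab => Finset.disjoint_left.mpr fun _ hza hzb =>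
      hS a ha b hb hab (near_of_mem_neighborFinset_cons hza hzb)
  calc #S * (G.minDegree + 1) = ∑ _v ∈ S, (G.minDegree + 1) := by rw [sum_const, smul_eq_mul]
    _ ≤ ∑ v ∈ S, #(N v) := sum_le_sum fun v _ => by
        simpa [N] using G.minDegree_le_degree v
    _ = #(S.biUnion N) := (card_biUnion hdisj).symm
    _ ≤ Fintype.card V := card_le_univ _

lemma RainbowReachable.symm {c : V → ℕ} {u v : V} (h : G.RainbowReachable c u v) :
    G.RainbowReachable c v u := by
  obtain ⟨p, hp⟩ := h
  exact ⟨p.reverse, by simpa [Walk.innerSupport_reverse] using hp⟩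

lemma rainbowReachable_of_subset {c : V → ℕ} {u v : V} (p : G.Walk u v) {F : List V}
    (hpF : ∀ w ∈ p.innerSupport, w ∈ F) (hF : (F.map c).Nodup) :
    G.RainbowReachable c u v :=
  ⟨p, fun _ hx _ hy => List.inj_on_of_nodup_map hF (hpF _ hx) (hpF _ hy)⟩

lemma isRainbowVColoring_of_rainbowReachable {c : V → ℕ} {k : ℕ} (hc : ∀ w, c w < k)
    (h : ∀ u v, G.RainbowReachable c u v) : IsRainbowVColoring G c k := by
  classical
  intro u v
  obtain ⟨p, hp⟩ := h u v
  have hq := p.bypass_isPath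
  have hsub : ∀ w ∈ p.bypass.innerSupport, w ∈ p.innerSupport := fun w hw =>
    Walk.mem_innerSupport_of_mem_support
      (p.support_bypass_subset_support (Walk.mem_support_of_mem_innerSupport hw))
      (hq.ne_of_mem_innerSupport hw).1 (hq.ne_of_mem_innerSupport hw).2
  refine ⟨p.bypass, hq, ?_, fun w _ => hc w⟩
  exact (hq.support_nodup.sublist p.bypass.innerSupport_sublist_support).map_on
    fun x hx y hy hxy => hp (hsub x hx) (hsub y hy) hxy

lemma rainbowReachable_of_near {c : V → ℕ} {u v : V} (h : G.Near u v) :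
    G.RainbowReachable c u v := by
  rcases h with rfl | h | ⟨w, h₁, h₂⟩
  · exact ⟨.nil, by simp⟩
  · exact ⟨.cons h .nil, by simp [Walk.innerSupport_cons]⟩
  · exact rainbowReachable_of_subset (.cons h₁ (.cons h₂ .nil)) (F := [w])
      (by simp [Walk.innerSupport_cons]) (by simp)

end SimpleGraph

namespace RainbowVertexConnection

variable {V : Type*} {G : SimpleGraph V} {D S M : Finset V} {r : V}

variable (G) in
def IsRootedConnected (D : Finset V) (r : V) : Prop :=
  ∀ a ∈ D, ∃ p : G.Walk a r, ∀ x ∈ p.support, x ∈ D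

variable (G) in
def IsTwoDominating (D : Finset V) : Prop := ∀ v, ∃ d ∈ D, G.Near v d

variable (G) in
structure IsSkeleton (D S : Finset V) (r : V) : Prop where
  root_mem : r ∈ D
  rootedConnected : IsRootedConnected G D r
  subset : S ⊆ D
  isPacking : G.IsPacking S
  card_add_two_le : #D + 2 ≤ 3 * #S

lemma IsRootedConnected.insert [DecidableEq V] {b d : V} (hD : IsRootedConnected G D r)
    (hbd : G.Adj b d) (hd : d ∈ D) : IsRootedConnected G (insert b D) r := by
  intro e he
  rcases mem_insert.mp he with rfl | he
  · obtain ⟨p, hp⟩ := hD d hd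
    refine ⟨.cons hbd p, ?_⟩
    simp only [Walk.support_cons, List.mem_cons]
    rintro y (rfl | hy)
    · exact mem_insert_self _ _
    · exact mem_insert_of_mem (hp y hy)
  · obtain ⟨q, hq⟩ := hD e he
    exact ⟨q, fun y hy => mem_insert_of_mem (hq y hy)⟩

lemma IsSkeleton.singleton [DecidableEq V] (r : V) : IsSkeleton G {r} {r} r where
  root_mem := mem_singleton_self r
  rootedConnected a ha := by
    rw [mem_singleton.mp ha]
    exact ⟨Walk.nil, by simp⟩
  subset := subset_refl _
  isPacking a ha b hb hab := absurd ((mem_singleton.mp ha).trans (mem_singleton.mp hb).symm) hab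
  card_add_two_le := by simp

lemma IsSkeleton.extend [DecidableEq V] {x a b d : V}
    (hS : IsSkeleton G D S r) (hx : ∀ e ∈ D, ¬ G.Near x e)
    (hxa : G.Adj x a) (hab : G.Adj a b) (hbd : G.Adj b d) (hd : d ∈ D) :
    IsSkeleton G (insert x (insert a (insert b D))) (insert x S) r := by
  have hxD : x ∉ D := fun h => hx x h (Near.refl x)
  have hDD : D ⊆ insert x (insert a (insert b D)) := fun e he => by simp [he]
  refine ⟨hDD hS.root_mem, ?_, insert_subset_insert x (hS.subset.trans fun e he => by simp [he]),
    hS.isPacking.insert fun s hs => hx s (hS.subset hs), ?_⟩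
  · exact ((hS.rootedConnected.insert hbd hd).insert hab (mem_insert_self _ _)).insert hxa
      (mem_insert_self _ _)
  · have := card_insert_le x (insert a (insert b D))
    have := card_insert_le a (insert b D)
    have := card_insert_le b D
    have := hS.card_add_two_le
    rw [card_insert_of_notMem fun h => hxD (hS.subset h)]
    omega

lemma exists_far_adj_chain {z : V} (p : G.Walk z r) (hr : r ∈ D)
    (hz : ∀ e ∈ D, ¬ G.Near z e) :
    ∃ x a b d, (∀ e ∈ D, ¬ G.Near x e) ∧ G.Adj x a ∧ G.Adj a b ∧ G.Adj b d ∧ d ∈ D := by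
  induction p with
  | nil => exact absurd (Near.refl _) (hz _ hr)
  | @cons z z' r hzz' p ih =>
    by_cases hz' : ∀ e ∈ D, ¬ G.Near z' e
    · exact ih hr hz'
    push Not at hz'
    obtain ⟨e, he, rfl | hz'e | ⟨w, hz'w, hwe⟩⟩ := hz'
    · exact absurd (Or.inr (Or.inl hzz')) (hz _ he)
    · exact absurd (Or.inr (Or.inr ⟨_, hzz', hz'e⟩)) (hz e he)
    · exact ⟨z, z', w, e, hz, hzz', hz'w, hwe, he⟩

lemma exists_isSkeleton_isTwoDominating [Fintype V] (hG : G.Connected) :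
    ∃ D S r, IsSkeleton G D S r ∧ IsTwoDominating G D := by
  classical
  obtain ⟨r⟩ := hG.nonempty
  obtain ⟨⟨D, S⟩, hDS, hmax⟩ := (univ.filter fun P : Finset V × Finset V =>
    IsSkeleton G P.1 P.2 r).exists_max_image (fun P => #P.1)
      ⟨({r}, {r}), by simpa using IsSkeleton.singleton r⟩
  have hS : IsSkeleton G D S r := (mem_filter.mp hDS).2
  refine ⟨D, S, r, hS, fun v => ?_⟩
  by_contra! hv
  obtain ⟨x, a, b, d, hx, hxa, hab, hbd, hd⟩ := exists_far_adj_chain (hG v r).some hS.root_mem hv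
  have hlt : #D < #(insert x (insert a (insert b D))) :=
    card_lt_card <| ssubset_of_subset_of_ne (fun e he => by simp [he])
      fun h => hx x (h ▸ mem_insert_self x _) (Near.refl x)
  exact absurd (hmax (_, _) (mem_filter.mpr ⟨mem_univ _, hS.extend hx hxa hab hbd hd⟩))
    (not_le.mpr hlt)

variable (G D) in
def InLayer1 (v : V) : Prop := v ∉ D ∧ ∃ d ∈ D, G.Adj v d

variable (G D) in
def InLayer2 (v : V) : Prop := v ∉ D ∧ ∀ d ∈ D, ¬ G.Adj v d

variable (G D) in
structure IsMaxLayer2Packing (M : Finset V) : Prop where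
  layer2 : ∀ m ∈ M, InLayer2 G D m
  isPacking : G.IsPacking M
  card_le : ∀ M' : Finset V, (∀ m ∈ M', InLayer2 G D m) → G.IsPacking M' → #M' ≤ #M

lemma mem_or_inLayer1_or_inLayer2 (v : V) : v ∈ D ∨ InLayer1 G D v ∨ InLayer2 G D v := by
  by_cases hv : v ∈ D
  · exact Or.inl hv
  by_cases h : ∃ d ∈ D, G.Adj v d
  · exact Or.inr (Or.inl ⟨hv, h⟩)
  · push Not at h
    exact Or.inr (Or.inr ⟨hv, h⟩)

lemma InLayer1.not_inLayer2 {v : V} (h : InLayer1 G D v) : ¬ InLayer2 G D v :=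
  fun h₂ => h.2.elim fun d ⟨hd, hvd⟩ => h₂.2 d hd hvd

lemma InLayer2.not_mem_of_adj {v w : V} (hv : InLayer2 G D v) (h : G.Adj w v) : w ∉ D :=
  fun hw => hv.2 w hw h.symm

lemma InLayer2.exists_adj_inLayer1 (hdom : IsTwoDominating G D) {v : V}
    (hv : InLayer2 G D v) : ∃ y, G.Adj v y ∧ InLayer1 G D y := by
  obtain ⟨d, hd, rfl | hvd | ⟨y, hvy, hyd⟩⟩ := hdom v
  · exact absurd hd hv.1
  · exact absurd hvd (hv.2 d hd)
  · exact ⟨y, hvy, fun hy => hv.2 y hy hvy, d, hd, hyd⟩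

variable (G D) in
lemma exists_isMaxLayer2Packing [Fintype V] : ∃ M, IsMaxLayer2Packing G D M := by
  classical
  obtain ⟨M, hM, hmax⟩ := (univ.filter fun M : Finset V =>
    (∀ m ∈ M, InLayer2 G D m) ∧ G.IsPacking M).exists_max_image card
      ⟨∅, mem_filter.mpr ⟨mem_univ _, by simp, by simp [IsPacking]⟩⟩
  obtain ⟨-, hM2, hMp⟩ := mem_filter.mp hM
  exact ⟨M, hM2, hMp, fun M' h₂ hp => hmax M' (mem_filter.mpr ⟨mem_univ _, h₂, hp⟩)⟩

open Classical in
noncomputable def idx (s : Finset V) (v : V) : ℕ := if h : v ∈ s then s.equivFin ⟨v, h⟩ else 0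

lemma idx_lt {s : Finset V} {v : V} (h : v ∈ s) : idx s v < #s := by
  rw [idx, dif_pos h]
  exact Fin.is_lt _

lemma idx_injOn (s : Finset V) : Set.InjOn (idx s) s := fun u hu v hv h => by
  rw [idx, idx, dif_pos (mem_coe.mp hu), dif_pos (mem_coe.mp hv)] at h
  exact congrArg Subtype.val (s.equivFin.injective (Fin.ext h))

variable (G D) in
/-- When `M` is a packing, `h.choose` is the only neighbour of `v` in `M`. -/
noncomputable def color (M : Finset V) (v : V) : ℕ :=
  open Classical in
  if v ∈ D then idx D v
  else if ∃ d ∈ D, G.Adj v d then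
    if h : ∃ m ∈ M, G.Adj v m then #D + idx M h.choose else #D + #M
  else if v ∈ M then #D + #M + 2 else #D + #M + 1

lemma color_lt (v : V) : color G D M v < #D + #M + 3 := by
  unfold color
  split_ifs with h₁ _ h₃
  · exact (idx_lt h₁).trans_le (by omega)
  · have := idx_lt h₃.choose_spec.1
    omega
  all_goals omega

lemma eq_of_color_eq_of_mem {x y : V} (hx : x ∈ D) (h : color G D M y = color G D M x) :
    y = x := by
  have hcx : color G D M x = idx D x := by rw [color, if_pos hx]
  by_cases hy : y ∈ D
  · rw [hcx, color, if_pos hy] at h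
    exact idx_injOn D hy hx h
  · have : #D ≤ color G D M y := by
      unfold color
      split_ifs <;> omega
    have := idx_lt hx
    omega

lemma color_of_adj_mem (hM : G.IsPacking M) {y m : V} (hy : InLayer1 G D y) (hm : m ∈ M)
    (hym : G.Adj y m) : color G D M y = #D + idx M m := by
  have h : ∃ m ∈ M, G.Adj y m := ⟨m, hm, hym⟩
  rw [color, if_neg hy.1, if_pos hy.2, dif_pos h]
  obtain ⟨hm', hym'⟩ := h.choose_spec
  by_contra hne
  exact hM _ hm' m hm (fun h' => hne (by rw [h'])) (Or.inr (Or.inr ⟨y, hym'.symm, hym⟩))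

lemma color_le_of_inLayer1 {y : V} (hy : InLayer1 G D y) : color G D M y ≤ #D + #M := by
  rw [color, if_neg hy.1, if_pos hy.2]
  split_ifs with h
  · exact Nat.add_le_add_left (idx_lt h.choose_spec.1).le _
  · exact le_rfl

lemma adj_of_color_eq (hM : G.IsPacking M) {y m : V} (hy : InLayer1 G D y) (hm : m ∈ M)
    (h : color G D M y = #D + idx M m) : G.Adj y m := by
  by_cases hym : ∃ m' ∈ M, G.Adj y m'
  · obtain ⟨m', hm', hym'⟩ := hym
    rwa [idx_injOn M hm hm' (by have := color_of_adj_mem hM hy hm' hym'; omega)]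
  · rw [color, if_neg hy.1, if_pos hy.2, dif_neg hym] at h
    have := idx_lt hm
    omega

lemma color_of_mem (hM : ∀ m ∈ M, InLayer2 G D m) {m : V} (hm : m ∈ M) :
    color G D M m = #D + #M + 2 := by
  have hm₂ := hM m hm
  rw [color, if_neg hm₂.1, if_neg fun ⟨d, hd, h⟩ => hm₂.2 d hd h, if_pos hm]

lemma color_of_inLayer2 {v : V} (hv : InLayer2 G D v) (hvM : v ∉ M) :
    color G D M v = #D + #M + 1 := by
  rw [color, if_neg hv.1, if_neg fun ⟨d, hd, h⟩ => hv.2 d hd h, if_neg hvM]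

variable (G D) in
def ReachesVia (v : V) (F : List V) : Prop :=
  ∃ a ∈ D, ∃ p : G.Walk v a, ∀ w ∈ p.innerSupport, w ∈ F

lemma ReachesVia.of_mem {v : V} (hv : v ∈ D) : ReachesVia G D v [] :=
  ⟨v, hv, .nil, by simp⟩

lemma ReachesVia.append {v x : V} {T F : List V} (q : G.Walk v x)
    (hq : ∀ w ∈ q.innerSupport, w ∈ T) (hx : ReachesVia G D x F) :
    ReachesVia G D v (T ++ x :: F) := by
  obtain ⟨a, ha, p, hp⟩ := hx
  refine ⟨a, ha, q.append p, fun w hw => ?_⟩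
  rcases q.mem_innerSupport_append p hw with hw | rfl | hw
  · exact List.mem_append_left _ (hq w hw)
  · simp
  · simp [hp w hw]

lemma ReachesVia.cons {v x : V} {F : List V} (h : G.Adj v x) (hx : ReachesVia G D x F) :
    ReachesVia G D v (x :: F) :=
  ReachesVia.append (T := []) (.cons h .nil) (by simp [Walk.innerSupport_cons]) hx

lemma reachesVia_of_not_inLayer2 {v : V} (hv : ¬ InLayer2 G D v) : ReachesVia G D v [] := by
  rcases mem_or_inLayer1_or_inLayer2 (G := G) (D := D) v with hv' | ⟨-, d, hd, hvd⟩ | hv'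
  · exact .of_mem hv'
  · exact ⟨d, hd, .cons hvd .nil, by simp [Walk.innerSupport_cons]⟩
  · exact absurd hv' hv

lemma reachesVia_of_adj_inLayer1 {v y : V} (hvy : G.Adj v y) (hy : InLayer1 G D y) :
    ReachesVia G D v [y] :=
  .cons hvy (reachesVia_of_not_inLayer2 hy.not_inLayer2)

lemma exists_reachesVia (hdom : IsTwoDominating G D) (v : V) :
    ∃ F, ReachesVia G D v F ∧ F.length ≤ 1 := by
  by_cases hv : InLayer2 G D v
  · obtain ⟨y, hvy, hy⟩ := hv.exists_adj_inLayer1 hdom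
    exact ⟨[y], reachesVia_of_adj_inLayer1 hvy hy, le_rfl⟩
  · exact ⟨[], reachesVia_of_not_inLayer2 hv, zero_le_one⟩

lemma rainbowReachable_of_reachesVia {c : V → ℕ} {u v : V} {F₁ F₂ : List V}
    (hD : IsRootedConnected G D r) (hc : ∀ x ∈ D, ∀ y, c y = c x → y = x)
    (hu : ReachesVia G D u F₁) (hv : ReachesVia G D v F₂) (hF : ((F₁ ++ F₂).map c).Nodup) :
    G.RainbowReachable c u v := by
  obtain ⟨a, ha, p₁, hp₁⟩ := hu
  obtain ⟨b, hb, p₂, hp₂⟩ := hv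
  obtain ⟨qa, hqa⟩ := hD a ha
  obtain ⟨qb, hqb⟩ := hD b hb
  let q := qa.append qb.reverse
  have hq : ∀ w ∈ q.support, w ∈ D := fun w hw => by
    rcases (Walk.mem_support_append_iff _ _).mp hw with hw | hw
    · exact hqa w hw
    · exact hqb w (by simpa using hw)
  have hmem : ∀ w ∈ (p₁.append (q.append p₂.reverse)).innerSupport, w ∈ D ∨ w ∈ F₁ ++ F₂ := by
    intro w hw
    rcases p₁.mem_innerSupport_append _ hw with hw | rfl | hw
    · exact Or.inr (List.mem_append_left _ (hp₁ w hw))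
    · exact Or.inl ha
    rcases q.mem_innerSupport_append _ hw with hw | rfl | hw
    · exact Or.inl (hq w (Walk.mem_support_of_mem_innerSupport hw))
    · exact Or.inl hb
    · rw [Walk.innerSupport_reverse, List.mem_reverse] at hw
      exact Or.inr (List.mem_append_right _ (hp₂ w hw))
  refine ⟨p₁.append (q.append p₂.reverse), fun x hx y hy hxy => ?_⟩
  rcases hmem x hx with hx | hx
  · exact (hc x hx y hxy.symm).symm
  rcases hmem y hy with hy | hy
  · exact hc y hy x hxy
  · exact List.inj_on_of_nodup_map hF hx hy hxy


variable (G D) in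
def LinkedTo (v m : V) : Prop :=
  v = m ∨ G.Adj v m ∨ ∃ z, InLayer2 G D z ∧ G.Adj v z ∧ G.Adj z m

lemma LinkedTo.exists_walk (hM : IsMaxLayer2Packing G D M) {v m : V} (hm : m ∈ M)
    (h : LinkedTo G D v m) :
    ∃ (t : G.Walk v m) (T : List V), (∀ w ∈ t.innerSupport, w ∈ T) ∧
      (T.map (color G D M) = [] ∨ T.map (color G D M) = [#D + #M + 1]) := by
  rcases h with rfl | hvm | ⟨z, hz, hvz, hzm⟩
  · exact ⟨.nil, [], by simp, Or.inl rfl⟩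
  · exact ⟨.cons hvm .nil, [], by simp [Walk.innerSupport_cons], Or.inl rfl⟩
  · have hzM : z ∉ M := fun hzM =>
      hM.isPacking z hzM m hm hzm.ne (Or.inr (Or.inl hzm))
    refine ⟨.cons hvz (.cons hzm .nil), [z], by simp [Walk.innerSupport_cons], Or.inr ?_⟩
    simp [color_of_inLayer2 hz hzM]

lemma rainbowReachable_of_linkedTo {u y v m : V} (hD : IsRootedConnected G D r)
    (hdom : IsTwoDominating G D) (hM : IsMaxLayer2Packing G D M)
    (huy : G.Adj u y) (hy : InLayer1 G D y) (hm : m ∈ M) (hv : LinkedTo G D v m) :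
    G.RainbowReachable (color G D M) u v := by
  obtain ⟨t, T, ht, hT⟩ := hv.exists_walk hM hm
  have hcm := color_of_mem hM.layer2 hm
  have hidx := idx_lt hm
  have hcy := color_le_of_inLayer1 (M := M) hy
  by_cases hym : color G D M y = #D + idx M m
  · refine rainbowReachable_of_subset (.cons huy (.cons (adj_of_color_eq hM.isPacking hy hm hym)
      t.reverse)) (F := y :: m :: T) (fun w hw => ?_) ?_
    · rcases Walk.mem_innerSupport_cons _ _ hw with rfl | hw
      · simp
      rcases Walk.mem_innerSupport_cons _ _ hw with rfl | hw
      · simp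
      rw [Walk.innerSupport_reverse, List.mem_reverse] at hw
      simp [ht w hw]
    · rw [List.map_cons, List.map_cons]
      rcases hT with hT | hT <;> simp [hT, hym, hcm] <;> omega
  · obtain ⟨ym, hmym, hym'⟩ := (hM.layer2 m hm).exists_adj_inLayer1 hdom
    refine rainbowReachable_of_reachesVia hD (fun x hx y h => eq_of_color_eq_of_mem hx h)
      (reachesVia_of_adj_inLayer1 huy hy)
      (ReachesVia.append t ht (reachesVia_of_adj_inLayer1 hmym hym')) ?_
    rw [List.singleton_append, List.map_cons, List.map_append, List.map_cons, List.map_cons,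
      color_of_adj_mem hM.isPacking hym' hm hmym.symm]
    rcases hT with hT | hT <;> simp [hT, hcm] <;> omega


lemma exists_adj_inLayer1_of_near (hM : ∀ m ∈ M, InLayer2 G D m) {x m : V} (hm : m ∈ M)
    (h : G.Near x m) (hx : ¬ LinkedTo G D x m) : ∃ w, G.Adj x w ∧ InLayer1 G D w ∧ G.Adj w m := by
  rcases h with h | h | ⟨w, hxw, hwm⟩
  · exact absurd (Or.inl h) hx
  · exact absurd (Or.inr (Or.inl h)) hx
  rcases mem_or_inLayer1_or_inLayer2 (G := G) (D := D) w with hw | hw | hw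
  · exact absurd hw ((hM m hm).not_mem_of_adj hwm)
  · exact ⟨w, hxw, hw, hwm⟩
  · exact absurd (Or.inr (Or.inr ⟨w, hw, hxw, hwm⟩)) hx

/-- `u` and `v` could both join `M` once the at most one `m ∈ M` with `#D + idx M m = κ` is
removed. -/
lemma false_of_locked (hM : IsMaxLayer2Packing G D M) {u v : V} (hu : InLayer2 G D u)
    (hv : InLayer2 G D v) (huv : ¬ G.Near u v) {κ : ℕ}
    (hκu : ∀ y, G.Adj u y → InLayer1 G D y → color G D M y = κ)
    (hκv : ∀ y, G.Adj v y → InLayer1 G D y → color G D M y = κ)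
    (hlu : ∀ m ∈ M, ¬ LinkedTo G D u m) (hlv : ∀ m ∈ M, ¬ LinkedTo G D v m) : False := by
  classical
  let P m := G.Near u m ∨ G.Near v m
  have hidx : ∀ m ∈ M, P m → #D + idx M m = κ := by
    intro m hm hP
    have key : ∀ x, (∀ y, G.Adj x y → InLayer1 G D y → color G D M y = κ) →
        ¬ LinkedTo G D x m → G.Near x m → #D + idx M m = κ := fun x hκ hl h => by
      obtain ⟨w, hxw, hw, hwm⟩ := exists_adj_inLayer1_of_near hM.layer2 hm h hl
      rw [← color_of_adj_mem hM.isPacking hw hm hwm, hκ w hxw hw]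
    exact hP.elim (key u hκu (hlu m hm)) (key v hκv (hlv m hm))
  have hP : #(M.filter P) ≤ 1 := card_le_one.mpr fun a ha b hb => by
    rw [mem_filter] at ha hb
    exact idx_injOn M ha.1 hb.1 (by have := hidx a ha.1 ha.2; have := hidx b hb.1 hb.2; omega)
  let M₀ := M.filter fun m => ¬ P m
  have hM₀ : ∀ m ∈ M₀, ¬ G.Near u m ∧ ¬ G.Near v m := fun m hm => not_or.mp (mem_filter.mp hm).2
  have hvM₀ : v ∉ M₀ := fun h => (hM₀ v h).2 (Near.refl v)
  have huM₀ : u ∉ insert v M₀ := by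
    rw [mem_insert, not_or]
    exact ⟨fun h => huv (h ▸ Near.refl u), fun h => (hM₀ u h).1 (Near.refl u)⟩
  have hcard := hM.card_le (insert u (insert v M₀)) ?_ ?_
  · rw [card_insert_of_notMem huM₀, card_insert_of_notMem hvM₀] at hcard
    have : #(M.filter P) + #M₀ = #M := M.card_filter_add_card_filter_not P
    omega
  · intro m hm
    rcases mem_insert.mp hm with rfl | hm
    · exact hu
    rcases mem_insert.mp hm with rfl | hm
    · exact hv
    · exact hM.layer2 m (mem_filter.mp hm).1
  · refine ((hM.isPacking.subset (filter_subset _ _)).insert fun m hm => (hM₀ m hm).2).insert ?_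
    intro m hm
    rcases mem_insert.mp hm with rfl | hm
    · exact huv
    · exact (hM₀ m hm).1


lemma rainbowReachable_color (hD : IsRootedConnected G D r) (hdom : IsTwoDominating G D)
    (hM : IsMaxLayer2Packing G D M) (u v : V) : G.RainbowReachable (color G D M) u v := by
  have hc : ∀ x ∈ D, ∀ y, color G D M y = color G D M x → y = x :=
    fun x hx y h => eq_of_color_eq_of_mem hx h
  have hexit : ∀ u v, ¬ InLayer2 G D u → G.RainbowReachable (color G D M) u v := by
    intro u v hu
    obtain ⟨F, hF, hlen⟩ := exists_reachesVia hdom v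
    refine rainbowReachable_of_reachesVia hD hc (reachesVia_of_not_inLayer2 hu) hF ?_
    match F, hlen with
    | [], _ => simp
    | [_], _ => simp
  by_cases huv : G.Near u v
  · exact rainbowReachable_of_near huv
  rcases em' (InLayer2 G D u) with hu | hu
  · exact hexit u v hu
  rcases em' (InLayer2 G D v) with hv | hv
  · exact (hexit v u hv).symm
  obtain ⟨yu, huyu, hyu⟩ := hu.exists_adj_inLayer1 hdom
  obtain ⟨yv, hvyv, hyv⟩ := hv.exists_adj_inLayer1 hdom
  by_cases hdiff : ∃ y₁ y₂, G.Adj u y₁ ∧ InLayer1 G D y₁ ∧ G.Adj v y₂ ∧ InLayer1 G D y₂ ∧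
      color G D M y₁ ≠ color G D M y₂
  · obtain ⟨y₁, y₂, h₁, hy₁, h₂, hy₂, hne⟩ := hdiff
    exact rainbowReachable_of_reachesVia hD hc (reachesVia_of_adj_inLayer1 h₁ hy₁)
      (reachesVia_of_adj_inLayer1 h₂ hy₂) (by simpa using hne)
  push Not at hdiff
  by_cases hlv : ∃ m ∈ M, LinkedTo G D v m
  · obtain ⟨m, hm, hl⟩ := hlv
    exact rainbowReachable_of_linkedTo hD hdom hM huyu hyu hm hl
  by_cases hlu : ∃ m ∈ M, LinkedTo G D u m
  · obtain ⟨m, hm, hl⟩ := hlu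
    exact (rainbowReachable_of_linkedTo hD hdom hM hvyv hyv hm hl).symm
  push Not at hlv hlu
  exact (false_of_locked hM hu hv huv (fun y h hy => hdiff y yv h hy hvyv hyv)
    (fun y h hy => (hdiff yu y huyu hyu h hy).symm.trans (hdiff yu yv huyu hyu hvyv hyv))
    hlu hlv).elim

lemma isRainbowVColoring_color (hD : IsRootedConnected G D r)
    (hdom : IsTwoDominating G D) (hM : IsMaxLayer2Packing G D M) :
    IsRainbowVColoring G (color G D M) (#D + #M + 3) :=
  isRainbowVColoring_of_rainbowReachable color_lt (rainbowReachable_color hD hdom hM)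

end RainbowVertexConnection

open RainbowVertexConnection

theorem stmt_10_general {V : Type*} [Fintype V] (G : SimpleGraph V) [DecidableRel G.Adj]
    (hG : G.Connected) :
    (rvc G : ℝ) ≤ 4 * (Fintype.card V : ℝ) / (G.minDegree + 1) + 5 := by
  obtain ⟨D, S, r, hS, hdom⟩ := exists_isSkeleton_isTwoDominating hG
  obtain ⟨M, hM⟩ := exists_isMaxLayer2Packing G D
  have hrvc : rvc G ≤ 3 * #S + #M + 1 := by
    have : rvc G ≤ #D + #M + 3 :=
      Nat.sInf_le ⟨_, isRainbowVColoring_color hS.rootedConnected hdom hM⟩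
    have := hS.card_add_two_le
    omega
  have hSn : (#S * (G.minDegree + 1) : ℝ) ≤ Fintype.card V := by
    exact_mod_cast hS.isPacking.card_mul_le
  have hMn : (#M * (G.minDegree + 1) : ℝ) ≤ Fintype.card V := by
    exact_mod_cast hM.isPacking.card_mul_le
  have hδ : (0 : ℝ) < G.minDegree + 1 := by positivity
  rw [div_add' _ _ _ hδ.ne', le_div_iff₀ hδ]
  have : (rvc G : ℝ) ≤ 3 * #S + #M + 1 := by exact_mod_cast hrvc
  nlinarith

theorem stmt_10 {V : Type*} [Fintype V] (G : SimpleGraph V) [DecidableRel G.Adj]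
    (hG : G.Connected) (hδ1 : 16 ≤ G.minDegree)
    (hδ2 : (G.minDegree : ℝ) ≤ Real.sqrt (Fintype.card V - 1) - 2) :
    (rvc G : ℝ) ≤ 4 * (Fintype.card V : ℝ) / (G.minDegree + 1) + 5 :=
  stmt_10_general G hG
end

section
/- A connected graph G of order n with minimum degree δ = 3 satisfies rvc(G) ≤ 3n/4 − 2. -/
/-!
Grow a connected subgraph `H` of `G` by attaching pendant edges, keeping track of the
Kleitman–West potential `3L + D - n`, where `n`, `L` and `D` count the vertices, the leaves and
the dead leaves of `H` (leaves all of whose `G`-neighbours already lie in `H`). While `H` is not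
spanning, one of four local moves (attach a new neighbour of a non-leaf; two new neighbours of a
leaf; a new neighbour `y` of a leaf together with two new neighbours of `y`; a new common
neighbour of two leaves) does not decrease the potential, and gains `2` if it makes `H`
spanning. A star at a vertex of maximum degree can be brought to potential `6`, so we end with a
connected spanning subgraph in which every leaf is dead and `4L - n ≥ 8`. Internal vertices of
its paths are not leaves, so giving the `n - L` non-leaves distinct colours is a rainbow
vertex-colouring, and `rvc G ≤ n - L ≤ 3n/4 - 2`.
-/

open SimpleGraph

open Set

theorem rvc_le_ncard {V : Type*} {G : SimpleGraph V} {S : Set V} [Finite S]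
    (h : ∀ u v, ∃ p : G.Walk u v, p.IsPath ∧ ∀ w ∈ p.support.tail.dropLast, w ∈ S) :
    rvc G ≤ S.ncard := by
  classical
  let e := Finite.equivFin S
  let c : V → ℕ := fun w => if hw : w ∈ S then e ⟨w, hw⟩ else 0
  have hlt : ∀ w ∈ S, c w < S.ncard := fun w hw => by
    simp [c, hw, ← Nat.card_coe_set_eq]
  have hinj : InjOn c S := fun a ha b hb hab =>
    congrArg Subtype.val (e.injective (by simpa [c, ha, hb, Fin.val_inj] using hab))
  refine Nat.sInf_le ⟨c, fun u v => ?_⟩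
  obtain ⟨p, hp, hS⟩ := h u v
  have hnd : p.support.tail.dropLast.Nodup :=
    ((List.dropLast_sublist _).trans (List.tail_sublist _)).nodup hp.support_nodup
  exact ⟨p, hp, hnd.map_on fun a ha b hb => hinj (hS a ha) (hS b hb),
    fun w hw => hlt w (hS w hw)⟩

namespace SimpleGraph

variable {V : Type*} {G : SimpleGraph V}

theorem Walk.IsPath.neighborSet_nontrivial_of_mem_tail_dropLast {u v w : V} {p : G.Walk u v}
    (hp : p.IsPath) (hw : w ∈ p.support.tail.dropLast) : (G.neighborSet w).Nontrivial := by
  induction p with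
  | nil => simp at hw
  | cons h q ih =>
    cases q with
    | nil => simp at hw
    | cons h' q' =>
      rw [Walk.cons_isPath_iff] at hp
      rw [Walk.support_cons, List.tail_cons, Walk.support_cons,
        List.dropLast_cons_of_ne_nil (by simp)] at hw
      rcases List.mem_cons.1 hw with rfl | hw
      · refine ⟨_, h.symm, _, h', fun hu => hp.2 ?_⟩
        rw [hu, Walk.support_cons]
        exact List.mem_cons_of_mem _ q'.start_mem_support
      · exact ih hp.1 hw

theorem Connected.exists_adj_mem_notMem (hG : G.Connected) {s : Set V} (hs : s.Nonempty)
    (hsu : s ≠ univ) : ∃ x ∈ s, ∃ y ∉ s, G.Adj x y := by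
  obtain ⟨a, ha⟩ := hs
  obtain ⟨b, hb⟩ := (ne_univ_iff_exists_notMem s).1 hsu
  obtain ⟨d, -, hd, hd'⟩ := (hG.preconnected a b).some.exists_boundary_dart s ha hb
  exact ⟨d.fst, hd, d.snd, hd', d.adj⟩

theorem exists_adj_adj_of_ncard_eq_three {S : Set V} (hS : S.ncard = 3)
    (h : ∀ x ∈ S, ∃ y ∈ S, G.Adj x y) :
    ∃ a ∈ S, ∃ b ∈ S, ∃ c ∈ S, b ≠ c ∧ G.Adj a b ∧ G.Adj a c := by
  obtain ⟨p, q, r, hpq, hpr, hqr, rfl⟩ := ncard_eq_three.1 hS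
  simp only [mem_insert_iff, mem_singleton_iff, forall_eq_or_imp, forall_eq,
    exists_eq_or_imp, exists_eq_left, SimpleGraph.irrefl, false_or, or_false] at h ⊢
  grind [SimpleGraph.adj_comm]

theorem exists_adj_adj_notMem_insert [Finite V] {v : V} {S : Set V} (hS : S.ncard = 3)
    (hSv : S ⊆ G.neighborSet v) (hδ : ∀ u, 3 ≤ (G.neighborSet u).ncard)
    (hΔ : ∀ u, (G.neighborSet u).ncard ≤ 3) (hS' : ∀ x ∈ S, ¬G.neighborSet x ⊆ insert v S) :
    ∃ x ∈ S, ∃ z₁ z₂, z₁ ∉ insert v S ∧ z₂ ∉ insert v S ∧ z₁ ≠ z₂ ∧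
      G.Adj x z₁ ∧ G.Adj x z₂ := by
  by_contra hB
  push Not at hB
  -- Then every vertex of `S` has a neighbour in `S`, so some `a ∈ S` is adjacent to `v`, to two
  -- vertices of `S` and, by `hS'`, to a vertex outside `insert v S`: degree `4`.
  have hnb : ∀ x ∈ S, ∃ y ∈ S, G.Adj x y := by
    intro x hx
    by_contra hno
    push Not at hno
    have hout : G.neighborSet x \ {v} ⊆ (insert v S)ᶜ := fun a ⟨hxa, hav⟩ => by
      simp only [mem_compl_iff, mem_insert_iff, not_or]
      exact ⟨hav, fun haS => hno a haS hxa⟩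
    have h2 : 1 < (G.neighborSet x \ {v}).ncard := by
      have := ncard_sdiff_singleton_add_one (s := G.neighborSet x) (G.adj_symm (hSv hx))
      have := hδ x
      omega
    obtain ⟨z₁, hz₁, z₂, hz₂, hne⟩ := (one_lt_ncard).1 h2
    exact hB x hx z₁ z₂ (hout hz₁) (hout hz₂) hne hz₁.1 hz₂.1
  obtain ⟨a, ha, b, hb, c, hc, hbc, hab, hac⟩ := exists_adj_adj_of_ncard_eq_three hS hnb
  obtain ⟨z, haz, hz⟩ := not_subset.1 (hS' a ha)
  have hvbc : ({v, b, c} : Set V).ncard = 3 :=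
    ncard_eq_three.2 ⟨v, b, c, (hSv hb).ne, (hSv hc).ne, hbc, rfl⟩
  have hsub : ({v, b, c} : Set V) ⊂ G.neighborSet a := by
    refine (ssubset_iff_of_subset ?_).2 ⟨z, haz, fun hz' => hz ?_⟩
    · simp only [insert_subset_iff, singleton_subset_iff]
      exact ⟨G.adj_symm (hSv ha), hab, hac⟩
    · simp only [mem_insert_iff, mem_singleton_iff] at hz' ⊢
      rcases hz' with rfl | rfl | rfl <;> simp [hb, hc]
  have := ncard_lt_ncard hsub
  have := hΔ a
  omega

namespace Subgraph

variable {H : G.Subgraph}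

theorem Connected.exists_isPath_forall_neighborSet_nontrivial
    (hc : H.Connected) {u v : V} (hu : u ∈ H.verts) (hv : v ∈ H.verts) :
    ∃ p : G.Walk u v, p.IsPath ∧
      ∀ w ∈ p.support.tail.dropLast, (H.neighborSet w).Nontrivial := by
  classical
  obtain ⟨p⟩ : H.spanningCoe.Reachable u v :=
    (hc ⟨u, hu⟩ ⟨v, hv⟩).map ⟨Subtype.val, fun h => h⟩
  refine ⟨p.toPath.1.mapLe H.spanningCoe_le, p.toPath.2.mapLe _, fun w hw => ?_⟩
  rw [Walk.support_mapLe_eq_support] at hw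
  exact p.toPath.2.neighborSet_nontrivial_of_mem_tail_dropLast hw

theorem Connected.neighborSet_nonempty (hc : H.Connected)
    (hnt : H.verts.Nontrivial) {v : V} (hv : v ∈ H.verts) : (H.neighborSet v).Nonempty := by
  have := hnt.coe_sort
  exact hc.preconnected.exists_adj_of_nontrivial ⟨v, hv⟩

def leafSet (H : G.Subgraph) : Set V := {v | (H.neighborSet v).ncard = 1}

def deadLeafSet (H : G.Subgraph) : Set V := {v ∈ H.leafSet | G.neighborSet v ⊆ H.verts}

noncomputable def leafPotential (H : G.Subgraph) : ℤ :=
  3 * H.leafSet.ncard + H.deadLeafSet.ncard - H.verts.ncard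

theorem neighborSet_nonempty_of_mem_leafSet {v : V} (hv : v ∈ H.leafSet) :
    (H.neighborSet v).Nonempty :=
  nonempty_of_ncard_ne_zero (by simp [hv.out])

theorem leafSet_subset_verts : H.leafSet ⊆ H.verts := fun _ hv =>
  H.edge_vert (neighborSet_nonempty_of_mem_leafSet hv).choose_spec

theorem notMem_leafSet_of_nontrivial {v : V} (hv : (H.neighborSet v).Nontrivial) :
    v ∉ H.leafSet := fun hL => by
  obtain ⟨a, ha⟩ := ncard_eq_one.1 hL.out
  exact not_nontrivial_singleton (ha ▸ hv)

theorem deadLeafSet_subset_leafSet : H.deadLeafSet ⊆ H.leafSet := sep_subset _ _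

theorem notMem_deadLeafSet {v z : V} (hz : z ∉ H.verts) (hvz : G.Adj v z) :
    v ∉ H.deadLeafSet := fun hv => hz (hv.2 hvz)

theorem deadLeafSet_eq_leafSet (hu : H.verts = univ) : H.deadLeafSet = H.leafSet :=
  sep_eq_self_iff_mem_true.2 fun _ _ => hu ▸ subset_univ _

theorem ncard_deadLeafSet_add_ncard_le [Finite V] {s : Set V}
    (hs : s ⊆ H.leafSet \ H.deadLeafSet) : H.deadLeafSet.ncard + s.ncard ≤ H.leafSet.ncard := by
  have := ncard_le_ncard hs
  have := ncard_sdiff_add_ncard_of_subset (deadLeafSet_subset_leafSet (H := H))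
  omega

theorem leafPotential_of_verts_eq_univ [Finite V] (hu : H.verts = univ) :
    H.leafPotential = 4 * H.leafSet.ncard - H.verts.ncard := by
  rw [leafPotential, deadLeafSet_eq_leafSet hu]
  ring

theorem Connected.rvc_add_ncard_leafSet_le [Finite V] (hc : H.Connected)
    (hu : H.verts = univ) : rvc G + H.leafSet.ncard ≤ Nat.card V := by
  have hrvc : rvc G ≤ H.leafSetᶜ.ncard := rvc_le_ncard fun u v => by
    obtain ⟨p, hp, hw⟩ := hc.exists_isPath_forall_neighborSet_nontrivial (hu ▸ mem_univ u)
      (hu ▸ mem_univ v)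
    exact ⟨p, hp, fun w hw' => notMem_leafSet_of_nontrivial (hw w hw')⟩
  have := ncard_add_ncard_compl H.leafSet
  omega

section Pendant

variable {x y : V}

theorem verts_sup_subgraphOfAdj (hxy : G.Adj x y) (hx : x ∈ H.verts) :
    (H ⊔ G.subgraphOfAdj hxy).verts = insert y H.verts := by
  ext v
  simp only [verts_sup, subgraphOfAdj_verts, mem_union, mem_insert_iff, mem_singleton_iff]
  grind

theorem leafSet_sup_subgraphOfAdj [Finite V] (hxy : G.Adj x y)
    (hx : (H.neighborSet x).Nonempty) (hy : y ∉ H.verts) :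
    (H ⊔ G.subgraphOfAdj hxy).leafSet = insert y (H.leafSet \ {x}) := by
  have hyx : y ≠ x := fun h => hy (h ▸ H.edge_vert hx.choose_spec)
  ext v
  rcases eq_or_ne v y with rfl | hvy
  · have hN : H.neighborSet v = ∅ :=
      eq_empty_of_forall_notMem fun w hw => hy (H.edge_vert hw)
    simp [leafSet, neighborSet_sup, hN]
  rcases eq_or_ne v x with rfl | hvx
  · have hyN : y ∉ H.neighborSet v := fun h => hy (H.edge_vert (H.adj_symm h))
    have h1 := ncard_pos (s := H.neighborSet v) |>.2 hx
    simp only [leafSet, neighborSet_sup, neighborSet_fst_subgraphOfAdj, union_singleton,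
      ncard_insert_of_notMem hyN, mem_ofPred_eq, mem_insert_iff, hyx.symm, mem_sdiff,
      mem_singleton_iff, not_true_eq_false, and_false, or_false, iff_false]
    omega
  simp [leafSet, neighborSet_sup, neighborSet_subgraphOfAdj_of_ne_of_ne hxy hvx hvy, hvx, hvy]

theorem deadLeafSet_subset_sup_subgraphOfAdj (hxy : G.Adj x y) (hy : y ∉ H.verts) :
    H.deadLeafSet ⊆ (H ⊔ G.subgraphOfAdj hxy).deadLeafSet := by
  rintro v ⟨hvL, hvN⟩
  have hvx : v ≠ x := fun h => hy (hvN (h ▸ hxy))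
  have hvy : v ≠ y := fun h => hy (h ▸ leafSet_subset_verts hvL)
  refine ⟨?_, hvN.trans (subset_union_left)⟩
  simpa [leafSet, neighborSet_sup, neighborSet_subgraphOfAdj_of_ne_of_ne hxy hvx hvy] using hvL

theorem Connected.exists_pendant [Finite V] (hc : H.Connected) (hxy : G.Adj x y)
    (hx : (H.neighborSet x).Nonempty) (hy : y ∉ H.verts) :
    ∃ H' : G.Subgraph, H'.Connected ∧ H'.Adj x y ∧ H'.verts = insert y H.verts ∧
      H'.leafSet = insert y (H.leafSet \ {x}) ∧ H.deadLeafSet ⊆ H'.deadLeafSet := by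
  have hxV : x ∈ H.verts := H.edge_vert hx.choose_spec
  refine ⟨H ⊔ G.subgraphOfAdj hxy, ?_, Or.inr (by simp), verts_sup_subgraphOfAdj hxy hxV,
    leafSet_sup_subgraphOfAdj hxy hx hy, deadLeafSet_subset_sup_subgraphOfAdj hxy hy⟩
  exact connected_sup hc.preconnected (subgraphOfAdj_connected hxy).preconnected
    ⟨x, hxV, by simp⟩

end Pendant

theorem leafSet_subgraphOfAdj [Finite V] {v w : V} (hvw : G.Adj v w) :
    (G.subgraphOfAdj hvw).leafSet = {v, w} := by
  ext u
  rcases eq_or_ne u v with rfl | huv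
  · simp [leafSet, neighborSet_fst_subgraphOfAdj]
  rcases eq_or_ne u w with rfl | huw
  · simp [leafSet, neighborSet_snd_subgraphOfAdj]
  simp [leafSet, neighborSet_subgraphOfAdj_of_ne_of_ne hvw huv huw, huv, huw]

theorem exists_star [Finite V] {v x₁ x₂ x₃ : V} (h₁ : G.Adj v x₁) (h₂ : G.Adj v x₂)
    (h₃ : G.Adj v x₃) (h₁₂ : x₁ ≠ x₂) (h₁₃ : x₁ ≠ x₃) (h₂₃ : x₂ ≠ x₃) :
    ∃ H : G.Subgraph, H.Connected ∧ H.verts = insert v {x₁, x₂, x₃} ∧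
      H.leafSet = {x₁, x₂, x₃} := by
  have hx₂ : x₂ ∉ (G.subgraphOfAdj h₁).verts := by simp [h₂.ne', h₁₂.symm]
  obtain ⟨H₁, hc₁, hvx₂, hV₁, hL₁, -⟩ := (subgraphOfAdj_connected h₁).exists_pendant h₂
    ⟨x₁, by simp⟩ hx₂
  have hx₃ : x₃ ∉ H₁.verts := by simp [hV₁, h₃.ne', h₁₃.symm, h₂₃.symm]
  obtain ⟨H₂, hc₂, -, hV₂, hL₂, -⟩ := hc₁.exists_pendant h₃ ⟨x₂, hvx₂⟩ hx₃
  refine ⟨H₂, hc₂, ?_, ?_⟩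
  · rw [hV₂, hV₁, subgraphOfAdj_verts]
    ext; simp only [mem_insert_iff, mem_singleton_iff]; tauto
  · rw [hL₂, hL₁, leafSet_subgraphOfAdj]
    ext; simp only [mem_insert_iff, mem_singleton_iff, mem_sdiff]
    grind [h₁.ne, h₂.ne, h₃.ne]

section Moves

structure IsExpansion (a b : ℤ) (H H' : G.Subgraph) : Prop where
  connected : H'.Connected
  verts_ssubset : H.verts ⊂ H'.verts
  le : H.leafPotential + a ≤ H'.leafPotential
  le_of_verts_eq_univ : H'.verts = univ → H.leafPotential + b ≤ H'.leafPotential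

theorem IsExpansion.mono {a b a' b' : ℤ} {H' : G.Subgraph} (h : IsExpansion a b H H')
    (ha : a' ≤ a) (hb : b' ≤ b) : IsExpansion a' b' H H' :=
  ⟨h.connected, h.verts_ssubset, by linarith [h.le],
    fun hu => by linarith [h.le_of_verts_eq_univ hu]⟩

variable [Finite V] {x y : V}

theorem Connected.exists_isExpansion_of_notMem_leafSet (hc : H.Connected)
    (hx : (H.neighborSet x).Nonempty) (hxL : x ∉ H.leafSet) (hy : y ∉ H.verts)
    (hxy : G.Adj x y) : ∃ H', IsExpansion 2 3 H H' := by
  obtain ⟨H₁, hc₁, -, hV₁, hL₁, hD₁⟩ := hc.exists_pendant hxy hx hy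
  have hn : H₁.verts.ncard = H.verts.ncard + 1 := by rw [hV₁, ncard_insert_of_notMem hy]
  have hL : H₁.leafSet.ncard = H.leafSet.ncard + 1 := by
    rw [hL₁, sdiff_singleton_eq_self hxL,
      ncard_insert_of_notMem fun h => hy (leafSet_subset_verts h)]
  have hD := ncard_le_ncard hD₁
  have hDL := ncard_le_ncard (deadLeafSet_subset_leafSet (H := H))
  refine ⟨H₁, hc₁, hV₁ ▸ ssubset_insert hy, ?_, fun hu => ?_⟩
  · unfold leafPotential; omega
  · rw [leafPotential_of_verts_eq_univ hu]; unfold leafPotential; omega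

theorem Connected.exists_isExpansion_of_mem_leafSet_of_adj_of_adj (hc : H.Connected)
    (hxL : x ∈ H.leafSet) {y₁ y₂ : V} (hy₁ : y₁ ∉ H.verts) (hy₂ : y₂ ∉ H.verts) (hne : y₁ ≠ y₂)
    (hxy₁ : G.Adj x y₁) (hxy₂ : G.Adj x y₂) : ∃ H', IsExpansion 1 3 H H' := by
  obtain ⟨H₁, hc₁, hxy₁', hV₁, hL₁, hD₁⟩ :=
    hc.exists_pendant hxy₁ (neighborSet_nonempty_of_mem_leafSet hxL) hy₁
  have hy₂' : y₂ ∉ H₁.verts := by simp [hV₁, hne.symm, hy₂]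
  obtain ⟨H₂, hc₂, -, hV₂, hL₂, hD₂⟩ := hc₁.exists_pendant hxy₂ ⟨y₁, hxy₁'⟩ hy₂'
  have hn : H₂.verts.ncard = H.verts.ncard + 2 := by
    rw [hV₂, ncard_insert_of_notMem hy₂', hV₁, ncard_insert_of_notMem hy₁]
  have hxL₁ : x ∉ H₁.leafSet := by simp [hL₁, hxy₁.ne]
  have hL : H₂.leafSet.ncard = H.leafSet.ncard + 1 := by
    rw [hL₂, sdiff_singleton_eq_self hxL₁,
      ncard_insert_of_notMem fun h => hy₂' (leafSet_subset_verts h), hL₁,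
      ncard_exchange (fun h => hy₁ (leafSet_subset_verts h)) hxL]
  have hD := ncard_le_ncard (hD₁.trans hD₂)
  have hDL := ncard_deadLeafSet_add_ncard_le (H := H) (s := {x})
    (singleton_subset_iff.2 ⟨hxL, notMem_deadLeafSet hy₁ hxy₁⟩)
  rw [ncard_singleton] at hDL
  refine ⟨H₂, hc₂, ?_, ?_, fun hu => ?_⟩
  · rw [hV₂, hV₁]
    exact (ssubset_insert hy₁).trans_subset (subset_insert _ _)
  · unfold leafPotential; omega
  · rw [leafPotential_of_verts_eq_univ hu]; unfold leafPotential; omega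

theorem Connected.exists_isExpansion_of_mem_leafSet_of_adj_of_adj_of_adj (hc : H.Connected)
    (hxL : x ∈ H.leafSet) (hy : y ∉ H.verts) (hxy : G.Adj x y) {z₁ z₂ : V}
    (hz₁ : z₁ ∉ H.verts) (hz₂ : z₂ ∉ H.verts) (hne : z₁ ≠ z₂) (hyz₁ : G.Adj y z₁)
    (hyz₂ : G.Adj y z₂) : ∃ H', IsExpansion 0 2 H H' := by
  obtain ⟨H₁, hc₁, hxy', hV₁, hL₁, hD₁⟩ :=
    hc.exists_pendant hxy (neighborSet_nonempty_of_mem_leafSet hxL) hy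
  have hz₁' : z₁ ∉ H₁.verts := by simp [hV₁, hyz₁.ne', hz₁]
  obtain ⟨H₂, hc₂, hyz₁', hV₂, hL₂, hD₂⟩ := hc₁.exists_pendant hyz₁ ⟨x, hxy'.symm⟩ hz₁'
  have hz₂' : z₂ ∉ H₂.verts := by simp [hV₂, hV₁, hne.symm, hyz₂.ne', hz₂]
  obtain ⟨H₃, hc₃, -, hV₃, hL₃, hD₃⟩ := hc₂.exists_pendant hyz₂ ⟨z₁, hyz₁'⟩ hz₂'
  have hn : H₃.verts.ncard = H.verts.ncard + 3 := by
    rw [hV₃, ncard_insert_of_notMem hz₂', hV₂, ncard_insert_of_notMem hz₁', hV₁,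
      ncard_insert_of_notMem hy]
  have hyL₁ : y ∈ H₁.leafSet := by simp [hL₁]
  have hyL₂ : y ∉ H₂.leafSet := by simp [hL₂, hyz₁.ne]
  have hL : H₃.leafSet.ncard = H.leafSet.ncard + 1 := by
    rw [hL₃, sdiff_singleton_eq_self hyL₂,
      ncard_insert_of_notMem fun h => hz₂' (leafSet_subset_verts h), hL₂,
      ncard_exchange (fun h => hz₁' (leafSet_subset_verts h)) hyL₁, hL₁,
      ncard_exchange (fun h => hy (leafSet_subset_verts h)) hxL]
  have hD := ncard_le_ncard (hD₁.trans (hD₂.trans hD₃))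
  have hDL := ncard_deadLeafSet_add_ncard_le (H := H) (s := {x})
    (singleton_subset_iff.2 ⟨hxL, notMem_deadLeafSet hy hxy⟩)
  rw [ncard_singleton] at hDL
  refine ⟨H₃, hc₃, ?_, ?_, fun hu => ?_⟩
  · rw [hV₃, hV₂, hV₁]
    exact (ssubset_insert hy).trans_subset ((subset_insert _ _).trans (subset_insert _ _))
  · unfold leafPotential; omega
  · rw [leafPotential_of_verts_eq_univ hu]; unfold leafPotential; omega

theorem Connected.exists_isExpansion_of_mem_leafSet_of_adj_of_mem_leafSet (hc : H.Connected)
    (hxL : x ∈ H.leafSet) (hy : y ∉ H.verts) (hxy : G.Adj x y) {w : V} (hwL : w ∈ H.leafSet)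
    (hwx : w ≠ x) (hwy : G.Adj w y) (hw : ∀ z ∉ H.verts, G.Adj w z → z = y)
    (hyL : G.neighborSet y ∩ H.verts ⊆ H.leafSet) (hy₃ : 3 ≤ (G.neighborSet y).ncard) :
    ∃ H', IsExpansion 0 2 H H' := by
  obtain ⟨H₁, hc₁, -, hV₁, hL₁, hD₁⟩ :=
    hc.exists_pendant hxy (neighborSet_nonempty_of_mem_leafSet hxL) hy
  have hn : H₁.verts.ncard = H.verts.ncard + 1 := by rw [hV₁, ncard_insert_of_notMem hy]
  have hL : H₁.leafSet.ncard = H.leafSet.ncard := by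
    rw [hL₁, ncard_exchange (fun h => hy (leafSet_subset_verts h)) hxL]
  have hwD₁ : w ∈ H₁.deadLeafSet := by
    refine ⟨by simp [hL₁, hwL, hwx, hwy.ne], fun z hz => ?_⟩
    by_cases hzV : z ∈ H.verts
    · exact hV₁ ▸ mem_insert_of_mem _ hzV
    · exact hV₁ ▸ hw z hzV hz ▸ mem_insert _ _
  have hD : H.deadLeafSet.ncard + 1 ≤ H₁.deadLeafSet.ncard := by
    rw [← ncard_insert_of_notMem (notMem_deadLeafSet hy hwy)]
    exact ncard_le_ncard (insert_subset hwD₁ hD₁)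
  refine ⟨H₁, hc₁, hV₁ ▸ ssubset_insert hy, ?_, fun hu => ?_⟩
  · unfold leafPotential; omega
  · have hNy : G.neighborSet y ⊆ H.leafSet \ H.deadLeafSet := fun a ha => by
      have haV : a ∈ H.verts := by
        have : a ∈ H₁.verts := hu ▸ mem_univ a
        simpa [hV₁, (G.ne_of_adj ha).symm] using this
      exact ⟨hyL ⟨ha, haV⟩, notMem_deadLeafSet hy (G.adj_symm ha)⟩
    have hDL := ncard_deadLeafSet_add_ncard_le hNy
    rw [leafPotential_of_verts_eq_univ hu]; unfold leafPotential; omega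

end Moves

section Growth

variable [Finite V]

theorem Connected.exists_isExpansion (hG : G.Connected)
    (hδ : ∀ v, 3 ≤ (G.neighborSet v).ncard) (hc : H.Connected) (hnt : H.verts.Nontrivial)
    (hne : H.verts ≠ univ) : ∃ H', IsExpansion 0 2 H H' := by
  obtain ⟨x, hx, y, hy, hxy⟩ := hG.exists_adj_mem_notMem hnt.nonempty hne
  by_cases hA : ∃ u ∈ H.verts, u ∉ H.leafSet ∧ ∃ z ∉ H.verts, G.Adj u z
  · obtain ⟨u, hu, huL, z, hz, huz⟩ := hA
    exact (hc.exists_isExpansion_of_notMem_leafSet (hc.neighborSet_nonempty hnt hu) huL hz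
      huz).imp fun _ h => h.mono (by norm_num) (by norm_num)
  have hbd : ∀ u ∈ H.verts, ∀ z ∉ H.verts, G.Adj u z → u ∈ H.leafSet := by
    push Not at hA
    exact fun u hu z hz huz => by_contra fun huL => hA u hu huL z hz huz
  by_cases hB : ∃ u ∈ H.leafSet, ∃ z₁ z₂, z₁ ∉ H.verts ∧ z₂ ∉ H.verts ∧ z₁ ≠ z₂ ∧
      G.Adj u z₁ ∧ G.Adj u z₂
  · obtain ⟨u, huL, z₁, z₂, hz₁, hz₂, hne, h₁, h₂⟩ := hB
    exact (hc.exists_isExpansion_of_mem_leafSet_of_adj_of_adj huL hz₁ hz₂ hne h₁ h₂).imp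
      fun _ h => h.mono (by norm_num) (by norm_num)
  push Not at hB
  have hxL := hbd x hx y hy hxy
  by_cases hC : ∃ z₁ z₂, z₁ ∉ H.verts ∧ z₂ ∉ H.verts ∧ z₁ ≠ z₂ ∧ G.Adj y z₁ ∧ G.Adj y z₂
  · obtain ⟨z₁, z₂, hz₁, hz₂, hne, h₁, h₂⟩ := hC
    exact hc.exists_isExpansion_of_mem_leafSet_of_adj_of_adj_of_adj hxL hy hxy hz₁ hz₂ hne
      h₁ h₂
  push Not at hC
  have hout : (G.neighborSet y \ H.verts).ncard ≤ 1 :=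
    (ncard_le_one).2 fun a ha b hb => by_contra fun hab => hC a b ha.2 hb.2 hab ha.1 hb.1
  have hin : 1 < (G.neighborSet y ∩ H.verts).ncard := by
    have := ncard_inter_add_ncard_sdiff_eq_ncard (G.neighborSet y) H.verts
    have := hδ y
    omega
  obtain ⟨w, ⟨hyw, hw⟩, hwx⟩ := exists_ne_of_one_lt_ncard hin x
  have hwL := hbd w hw y hy hyw.symm
  refine hc.exists_isExpansion_of_mem_leafSet_of_adj_of_mem_leafSet hxL hy hxy hwL hwx
    hyw.symm (fun z hz hwz => ?_) (fun a ha => hbd a ha.2 y hy ha.1.symm) (hδ y)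
  by_contra hzy
  exact hB w hwL z y hz hy hzy hwz hyw.symm

theorem Connected.exists_verts_eq_univ_leafPotential_add_two_le {H : G.Subgraph}
    (hG : G.Connected) (hδ : ∀ v, 3 ≤ (G.neighborSet v).ncard) (hc : H.Connected)
    (hnt : H.verts.Nontrivial) (hne : H.verts ≠ univ) :
    ∃ H' : G.Subgraph, H'.Connected ∧ H'.verts = univ ∧
      H.leafPotential + 2 ≤ H'.leafPotential := by
  obtain ⟨H₁, h₁⟩ := hc.exists_isExpansion hG hδ hnt hne
  by_cases hu : H₁.verts = univ
  · exact ⟨H₁, h₁.connected, hu, h₁.le_of_verts_eq_univ hu⟩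
  obtain ⟨H₂, hc₂, hu₂, h₂⟩ :=
    h₁.connected.exists_verts_eq_univ_leafPotential_add_two_le hG hδ
      (hnt.mono h₁.verts_ssubset.subset) hu
  exact ⟨H₂, hc₂, hu₂, by linarith [h₁.le]⟩
termination_by H.vertsᶜ.ncard
decreasing_by exact ncard_lt_ncard (compl_lt_compl_iff_lt.2 h₁.verts_ssubset)

theorem Connected.exists_verts_eq_univ_eight_le_leafPotential
    (hG : G.Connected) (hδ : ∀ v, 3 ≤ (G.neighborSet v).ncard) (hc : H.Connected)
    (hnt : H.verts.Nontrivial) (h₆ : 6 ≤ H.leafPotential)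
    (h₈ : H.verts = univ → 8 ≤ H.leafPotential) :
    ∃ H' : G.Subgraph, H'.Connected ∧ H'.verts = univ ∧ 8 ≤ H'.leafPotential := by
  by_cases hu : H.verts = univ
  · exact ⟨H, hc, hu, h₈ hu⟩
  obtain ⟨H', hc', hu', h'⟩ := hc.exists_verts_eq_univ_leafPotential_add_two_le hG hδ hnt hu
  exact ⟨H', hc', hu', by omega⟩

theorem IsExpansion.exists_verts_eq_univ_eight_le_leafPotential {H' : G.Subgraph} {a b : ℤ}
    (h : IsExpansion a b H H') (hG : G.Connected) (hδ : ∀ v, 3 ≤ (G.neighborSet v).ncard)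
    (hnt : H.verts.Nontrivial) (ha : 6 ≤ H.leafPotential + a) (hb : 8 ≤ H.leafPotential + b) :
    ∃ H'' : G.Subgraph, H''.Connected ∧ H''.verts = univ ∧ 8 ≤ H''.leafPotential :=
  h.connected.exists_verts_eq_univ_eight_le_leafPotential hG hδ (hnt.mono h.verts_ssubset.subset)
    (ha.trans h.le) fun hu => hb.trans (h.le_of_verts_eq_univ hu)

theorem exists_verts_eq_univ_eight_le_leafPotential (hG : G.Connected)
    (hδ : ∀ v, 3 ≤ (G.neighborSet v).ncard) :
    ∃ H : G.Subgraph, H.Connected ∧ H.verts = univ ∧ 8 ≤ H.leafPotential := by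
  have := hG.nonempty
  obtain ⟨v, hΔ⟩ := Finite.exists_max fun v => (G.neighborSet v).ncard
  obtain ⟨x₁, x₂, x₃, h₁, h₂, h₃, h₁₂, h₁₃, h₂₃⟩ := (two_lt_ncard_iff).1 (hδ v)
  obtain ⟨H, hc, hV, hL⟩ := exists_star h₁ h₂ h₃ h₁₂ h₁₃ h₂₃
  set S : Set V := {x₁, x₂, x₃}
  have hS : S.ncard = 3 := ncard_eq_three.2 ⟨_, _, _, h₁₂, h₁₃, h₂₃, rfl⟩
  have hvS : v ∉ S := by simp [S, h₁.ne, h₂.ne, h₃.ne]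
  have hn : H.verts.ncard = 4 := by rw [hV, ncard_insert_of_notMem hvS, hS]
  have hnt : H.verts.Nontrivial := (one_lt_ncard_iff_nontrivial).1 (by omega)
  have hφ : H.leafPotential = 5 + H.deadLeafSet.ncard := by
    rw [leafPotential, hL, hS, hn]
    ring
  by_cases hu : H.verts = univ
  · refine ⟨H, hc, hu, ?_⟩
    rw [leafPotential_of_verts_eq_univ hu, hL, hS, hn]
    norm_num
  by_cases hD : H.deadLeafSet.Nonempty
  · have := (ncard_pos).2 hD
    exact hc.exists_verts_eq_univ_eight_le_leafPotential hG hδ hnt (by omega) (absurd · hu)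
  by_cases hNv : G.neighborSet v ⊆ H.verts
  · have hNS : G.neighborSet v ⊆ S := fun z hz =>
      (mem_insert_iff.1 (hV ▸ hNv hz)).resolve_left (G.ne_of_adj hz).symm
    have hS' : ∀ x ∈ S, ¬G.neighborSet x ⊆ insert v S := fun x hx hxN =>
      hD ⟨x, hL ▸ hx, hV ▸ hxN⟩
    obtain ⟨x, hx, z₁, z₂, hz₁, hz₂, hne, hxz₁, hxz₂⟩ := exists_adj_adj_notMem_insert hS
      (by simp [S, insert_subset_iff, h₁, h₂, h₃]) hδ
      (fun u => (hΔ u).trans (hS ▸ ncard_le_ncard hNS)) hS'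
    obtain ⟨H', h'⟩ := hc.exists_isExpansion_of_mem_leafSet_of_adj_of_adj (hL ▸ hx)
      (hV ▸ hz₁) (hV ▸ hz₂) hne hxz₁ hxz₂
    exact h'.exists_verts_eq_univ_eight_le_leafPotential hG hδ hnt (by omega) (by omega)
  · obtain ⟨z, hvz, hz⟩ := not_subset.1 hNv
    obtain ⟨H', h'⟩ := hc.exists_isExpansion_of_notMem_leafSet
      (hc.neighborSet_nonempty hnt (hV ▸ mem_insert v S)) (hL ▸ hvS) hz hvz
    exact h'.exists_verts_eq_univ_eight_le_leafPotential hG hδ hnt (by omega) (by omega)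

end Growth

end Subgraph

end SimpleGraph

theorem stmt_12 {V : Type*} [Fintype V] (G : SimpleGraph V) [DecidableRel G.Adj]
    (hG : G.Connected) (hδ : G.minDegree = 3) :
    (rvc G : ℝ) ≤ 3 * (Fintype.card V : ℝ) / 4 - 2 := by
  have hδ' : ∀ v, 3 ≤ (G.neighborSet v).ncard := fun v => by
    rw [← hδ, ncard_eq_toFinset_card', toFinset_card, card_neighborSet_eq_degree]
    exact G.minDegree_le_degree v
  obtain ⟨H, hc, hu, hφ⟩ := Subgraph.exists_verts_eq_univ_eight_le_leafPotential hG hδ'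
  have hrvc := hc.rvc_add_ncard_leafSet_le hu
  rw [Subgraph.leafPotential_of_verts_eq_univ hu, hu, ncard_univ] at hφ
  rw [Nat.card_eq_fintype_card] at hrvc hφ
  have hL : (Fintype.card V : ℝ) + 8 ≤ 4 * H.leafSet.ncard := by exact_mod_cast (by omega)
  have hrvc' : (rvc G : ℝ) + H.leafSet.ncard ≤ Fintype.card V := by exact_mod_cast hrvc
  linarith
end

section
/- The graph H obtained by taking m copies of K_{δ+1} labeled X_1,…,X_m and two copies of K_{δ+2} labeled X_0, X_{m+1}, joining x_{i,2} to x_{i+1,1} for i = 0,…,m, and deleting the edges x_{i,1}x_{i,2} for i = 0,…,m+1, is a connected graph on n = (m+2)(δ+1) + 2 vertices with minimum degree δ and diameter 3n/(δ+1) − (δ+7)/(δ+1). -/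
/-- The vertex set of the Caro et al. construction: copies `X_0, …, X_{m+1}`, where the middle
copies `X_1, …, X_m` have `δ+1` vertices (second coordinate at most `δ`) and the two end copies
`X_0`, `X_{m+1}` have `δ+2` vertices. The vertex `x_{i,j}` corresponds to the pair with first
coordinate `i` and second coordinate `j - 1`. -/
def caroVert (m δ : ℕ) : Type :=
  {p : Fin (m + 2) × Fin (δ + 2) // p.1.val = 0 ∨ p.1.val = m + 1 ∨ p.2.val ≤ δ}

instance (m δ : ℕ) : Fintype (caroVert m δ) := by
  unfold caroVert; infer_instance

/-- The base relation: complete within each copy except the deleted edge `x_{i,1}x_{i,2}`,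
together with the connecting edges `x_{i,2}x_{i+1,1}`. -/
def caroRel (m δ : ℕ) (a b : caroVert m δ) : Prop :=
  (a.1.1 = b.1.1 ∧ ¬(a.1.2.val = 0 ∧ b.1.2.val = 1) ∧ ¬(a.1.2.val = 1 ∧ b.1.2.val = 0)) ∨
  (b.1.1.val = a.1.1.val + 1 ∧ a.1.2.val = 1 ∧ b.1.2.val = 0)

/-- The graph `H` of the construction. -/
def caroGraph (m δ : ℕ) : SimpleGraph (caroVert m δ) :=
  SimpleGraph.fromRel (caroRel m δ)


/-!
Write `x_{i,j}` for the vertices. The level `3i`, `3i + 2`, `3i + 1` of `x_{i,1}`, `x_{i,2}` and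
of the other vertices of `X_i` grows by at most one along every edge, so `x_{0,1}` and
`x_{m+1,2}` are at distance at least `3m + 5`. Conversely, two vertices of one copy are joined
through some `x_{i,j}` with `j ≥ 3`, so following the connecting edges leads from `x_{i,2}` to
`x_{k,1}` in `3(k - i) - 2` steps, and every distance is at most `3m + 5`. A vertex is adjacent to its whole copy
except itself and, for `x_{i,1}` and `x_{i,2}`, each other; in a middle copy the connecting edge
makes up for the lost neighbour.
-/

namespace SimpleGraph

variable {V : Type*} {G : SimpleGraph V}

theorem Walk.apply_le_apply_add_length {f : V → ℕ} (hf : ∀ ⦃a b⦄, G.Adj a b → f b ≤ f a + 1)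
    {u v : V} (p : G.Walk u v) : f v ≤ f u + p.length := by
  induction p with
  | nil => simp
  | cons h _ ih => have := hf h; rw [Walk.length_cons]; omega

theorem sub_le_edist_of_adj_le_add_one {f : V → ℕ} (hf : ∀ ⦃a b⦄, G.Adj a b → f b ≤ f a + 1)
    (u v : V) : ((f v - f u : ℕ) : ℕ∞) ≤ G.edist u v := by
  by_cases huv : G.Reachable u v
  · obtain ⟨p, hp⟩ := huv.exists_walk_length_eq_edist
    rw [← hp, Nat.cast_le]
    have := p.apply_le_apply_add_length hf
    omega
  · simp [edist_eq_top_of_not_reachable huv]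

theorem edist_le_of_le_add {u v w : V} {k l n : ℕ} (huv : G.edist u v ≤ k)
    (hvw : G.edist v w ≤ l) (h : k + l ≤ n) : G.edist u w ≤ n :=
  G.edist_triangle.trans ((add_le_add huv hvw).trans (mod_cast h))

theorem edist_le_one_of_adj {u v : V} (h : G.Adj u v) : G.edist u v ≤ (1 : ℕ) := by
  simp [edist_eq_one_iff_adj.mpr h]

end SimpleGraph

namespace caroVert

variable {m δ : ℕ}

def copy (v : caroVert m δ) : ℕ := v.1.1.val

def pos (v : caroVert m δ) : ℕ := v.1.2.val

theorem ext_iff {a b : caroVert m δ} : a = b ↔ a.copy = b.copy ∧ a.pos = b.pos :=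
  ⟨fun h => h ▸ ⟨rfl, rfl⟩, fun ⟨h1, h2⟩ => Subtype.ext (Prod.ext (Fin.ext h1) (Fin.ext h2))⟩

theorem copy_lt (v : caroVert m δ) : v.copy < m + 2 := v.1.1.isLt

def mk (i j : ℕ) (hi : i < m + 2) (hj : j ≤ δ) : caroVert m δ :=
  ⟨(⟨i, hi⟩, ⟨j, by omega⟩), Or.inr (Or.inr hj)⟩

@[simp] theorem copy_mk {i j : ℕ} (hi : i < m + 2) (hj : j ≤ δ) : (mk i j hi hj).copy = i := rfl

@[simp] theorem pos_mk {i j : ℕ} (hi : i < m + 2) (hj : j ≤ δ) : (mk i j hi hj).pos = j := rfl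

/-- The vertex `x_{0,1}`. -/
def start : caroVert m δ := ⟨(⟨0, by omega⟩, ⟨0, by omega⟩), Or.inl rfl⟩

/-- The vertex `x_{m+1,2}`. -/
def finish : caroVert m δ := ⟨(⟨m + 1, by omega⟩, ⟨1, by omega⟩), Or.inr (Or.inl rfl)⟩

@[simp] theorem copy_start : (start : caroVert m δ).copy = 0 := rfl

@[simp] theorem pos_start : (start : caroVert m δ).pos = 0 := rfl

@[simp] theorem copy_finish : (finish : caroVert m δ).copy = m + 1 := rfl

@[simp] theorem pos_finish : (finish : caroVert m δ).pos = 1 := rfl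

instance : Nonempty (caroVert m δ) := ⟨start⟩

theorem ncard_copy {i : ℕ} (hi : i < m + 2) :
    {v : caroVert m δ | v.copy = i}.ncard = if i = 0 ∨ i = m + 1 then δ + 2 else δ + 1 := by
  let e : {v : caroVert m δ | v.copy = i} ≃ {j : Fin (δ + 2) // i = 0 ∨ i = m + 1 ∨ j.val ≤ δ} :=
    { toFun v := ⟨v.1.1.2, by
        have h : v.1.copy = i := v.2
        have := v.1.2
        unfold copy at h
        omega⟩
      invFun j := ⟨⟨(⟨i, hi⟩, j), j.2⟩, rfl⟩
      left_inv v := Subtype.ext (ext_iff.mpr ⟨v.2.symm, rfl⟩)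
      right_inv j := rfl }
  rw [← Nat.card_coe_set_eq, Nat.card_congr e, Nat.card_eq_fintype_card, Fintype.card_subtype]
  split_ifs with h
  · rw [Finset.filter_true_of_mem fun _ _ => or_assoc.mp (Or.inl h), Finset.card_univ,
      Fintype.card_fin]
  · simp only [not_or] at h
    simp only [h.1, h.2, false_or, ← Nat.lt_succ_iff, Fin.card_filter_val_lt]
    omega

end caroVert

open SimpleGraph caroVert

section

variable {m δ : ℕ}

theorem card_caroVert : Fintype.card (caroVert m δ) = (m + 2) * (δ + 1) + 2 := by
  rw [← Finset.card_univ, Finset.card_eq_sum_card_fiberwise (f := copy)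
    (t := Finset.range (m + 2)) fun v _ => Finset.mem_range.mpr v.copy_lt]
  have hfiber : ∀ i ∈ Finset.range (m + 2),
      (Finset.univ.filter fun v : caroVert m δ => v.copy = i).card =
        if i = 0 ∨ i = m + 1 then δ + 2 else δ + 1 := fun i hi => by
    rw [← ncard_copy (Finset.mem_range.mp hi), Set.ncard_eq_toFinset_card', Set.toFinset_ofPred]
  rw [Finset.sum_congr rfl hfiber, Finset.sum_range_succ, Finset.sum_range_succ',
    Finset.sum_congr rfl fun i hi => if_neg (by simp at hi; omega)]
  simp
  ring

theorem caroGraph_adj_iff {a b : caroVert m δ} : (caroGraph m δ).Adj a b ↔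
    a.copy = b.copy ∧ a.pos ≠ b.pos ∧ (2 ≤ a.pos ∨ 2 ≤ b.pos) ∨
    b.copy = a.copy + 1 ∧ a.pos = 1 ∧ b.pos = 0 ∨
    a.copy = b.copy + 1 ∧ b.pos = 1 ∧ a.pos = 0 := by
  simp only [caroGraph, fromRel_adj, caroRel, ne_eq, caroVert.ext_iff, Fin.ext_iff, copy, pos]
  omega

/-- The distance from `x_{0,1}` to `v`. -/
def caroLevel (v : caroVert m δ) : ℕ :=
  3 * v.copy + if v.pos = 0 then 0 else if v.pos = 1 then 2 else 1

theorem caroLevel_le_of_adj {a b : caroVert m δ} (h : (caroGraph m δ).Adj a b) :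
    caroLevel b ≤ caroLevel a + 1 := by
  rw [caroGraph_adj_iff] at h
  unfold caroLevel
  split_ifs <;> omega

theorem caroGraph_edist_start_finish :
    (3 * m + 5 : ℕ) ≤ (caroGraph m δ).edist start finish := by
  have hlevel : caroLevel (finish : caroVert m δ) - caroLevel (start : caroVert m δ) =
      3 * m + 5 := by
    simp [caroLevel]
    ring
  exact hlevel ▸ sub_le_edist_of_adj_le_add_one (fun _ _ => caroLevel_le_of_adj) start finish

theorem caroGraph_edist_le_one_of_copy_eq {a b : caroVert m δ} (h : a.copy = b.copy)
    (hb : 2 ≤ b.pos) : (caroGraph m δ).edist a b ≤ (1 : ℕ) := by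
  rw [Nat.cast_one, edist_le_one_iff_adj_or_eq, caroGraph_adj_iff, caroVert.ext_iff]
  omega

theorem caroGraph_edist_le_two_of_copy_eq (hδ : 2 ≤ δ) {a b : caroVert m δ}
    (h : a.copy = b.copy) : (caroGraph m δ).edist a b ≤ (2 : ℕ) := by
  let c : caroVert m δ := mk a.copy 2 a.copy_lt hδ
  have hcb : (caroGraph m δ).edist c b ≤ (1 : ℕ) := by
    rw [edist_comm]
    exact caroGraph_edist_le_one_of_copy_eq (by simp [c, h]) le_rfl
  exact edist_le_of_le_add (caroGraph_edist_le_one_of_copy_eq (a := a) (b := c) rfl le_rfl) hcb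
    le_rfl

theorem caroGraph_edist_le_of_link (hδ : 2 ≤ δ) (d : ℕ) {a b : caroVert m δ} (ha : a.pos = 1)
    (hb : b.pos = 0) (hab : b.copy = a.copy + d + 1) :
    (caroGraph m δ).edist a b ≤ (3 * d + 1 : ℕ) := by
  induction d generalizing b with
  | zero => exact edist_le_one_of_adj (caroGraph_adj_iff.mpr (by omega))
  | succ d ih =>
    have := b.copy_lt
    let c₀ : caroVert m δ := mk (a.copy + d + 1) 0 (by omega) (by omega)
    let c₁ : caroVert m δ := mk (a.copy + d + 1) 1 (by omega) (by omega)
    have hc₁b : (caroGraph m δ).Adj c₁ b :=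
      caroGraph_adj_iff.mpr (Or.inr (Or.inl ⟨by simp only [c₁, copy_mk]; omega, rfl, hb⟩))
    have hac₁ := edist_le_of_le_add (ih (b := c₀) rfl rfl)
      (caroGraph_edist_le_two_of_copy_eq hδ (b := c₁) rfl) le_rfl
    exact edist_le_of_le_add hac₁ (edist_le_one_of_adj hc₁b) (by omega)

theorem caroGraph_edist_le (hδ : 2 ≤ δ) (a b : caroVert m δ) :
    (caroGraph m δ).edist a b ≤ (3 * m + 5 : ℕ) := by
  wlog hab : a.copy ≤ b.copy generalizing a b
  · rw [edist_comm]
    exact this b a (by omega)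
  obtain hab | hab := hab.eq_or_lt
  · exact (caroGraph_edist_le_two_of_copy_eq hδ hab).trans (by norm_cast; omega)
  obtain ⟨d, hd⟩ : ∃ d, b.copy = a.copy + d + 1 := ⟨b.copy - a.copy - 1, by omega⟩
  let x₂ : caroVert m δ := mk a.copy 1 a.copy_lt (by omega)
  let y₁ : caroVert m δ := mk b.copy 0 b.copy_lt (by omega)
  have hay₁ := edist_le_of_le_add (caroGraph_edist_le_two_of_copy_eq hδ (a := a) (b := x₂) rfl)
    (caroGraph_edist_le_of_link hδ d (a := x₂) (b := y₁) rfl rfl hd) le_rfl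
  have := b.copy_lt
  exact edist_le_of_le_add hay₁ (caroGraph_edist_le_two_of_copy_eq hδ (b := b) rfl) (by omega)

theorem caroGraph_ediam (hδ : 2 ≤ δ) : (caroGraph m δ).ediam = (3 * m + 5 : ℕ) :=
  le_antisymm (ediam_le_of_edist_le (caroGraph_edist_le hδ))
    (caroGraph_edist_start_finish.trans edist_le_ediam)

theorem caroGraph_connected (hδ : 2 ≤ δ) : (caroGraph m δ).Connected :=
  connected_of_ediam_ne_top (by rw [caroGraph_ediam hδ]; exact ENat.natCast_ne_top _)

theorem caroGraph_diam (hδ : 2 ≤ δ) : (caroGraph m δ).diam = 3 * m + 5 := by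
  rw [diam, caroGraph_ediam hδ, ENat.toNat_natCast]

theorem caroGraph_exists_adj_copy_ne (hδ : 1 ≤ δ) {v : caroVert m δ} (hv : v.pos ≤ 1)
    (h₀ : v.copy ≠ 0) (h₁ : v.copy ≠ m + 1) :
    ∃ c, (caroGraph m δ).Adj v c ∧ c.copy ≠ v.copy := by
  have := v.copy_lt
  obtain hv | hv : v.pos = 0 ∨ v.pos = 1 := by omega
  · exact ⟨mk (v.copy - 1) 1 (by omega) hδ, caroGraph_adj_iff.mpr (by simp; omega),
      by simp; omega⟩
  · exact ⟨mk (v.copy + 1) 0 (by omega) (Nat.zero_le _), caroGraph_adj_iff.mpr (by simp; omega),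
      by simp⟩

theorem caroGraph_le_ncard_neighborSet (hδ : 1 ≤ δ) (v : caroVert m δ) :
    δ ≤ ((caroGraph m δ).neighborSet v).ncard := by
  set C := {w : caroVert m δ | w.copy = v.copy}
  have hC : C.ncard = if v.copy = 0 ∨ v.copy = m + 1 then δ + 2 else δ + 1 :=
    ncard_copy v.copy_lt
  by_cases hv : 2 ≤ v.pos
  · have hsub : C \ {v} ⊆ (caroGraph m δ).neighborSet v := by
      rintro w ⟨hw, hwv⟩
      rw [mem_neighborSet, caroGraph_adj_iff]
      simp only [C, Set.mem_ofPred_eq, Set.mem_singleton_iff, caroVert.ext_iff] at hw hwv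
      omega
    calc δ ≤ C.ncard - ({v} : Set _).ncard := by
          rw [Set.ncard_singleton]; split_ifs at hC <;> omega
      _ ≤ (C \ {v}).ncard := Set.le_ncard_sdiff _ _
      _ ≤ _ := Set.ncard_le_ncard hsub
  -- the other end of the deleted edge `x_{i,1} x_{i,2}` through `v`
  let p : caroVert m δ := mk v.copy (1 - v.pos) v.copy_lt (by omega)
  have hsub : C \ {v, p} ⊆ (caroGraph m δ).neighborSet v := by
    rintro w ⟨hw, hwv⟩
    rw [mem_neighborSet, caroGraph_adj_iff]
    simp only [C, p, Set.mem_ofPred_eq, Set.mem_insert_iff, Set.mem_singleton_iff,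
      caroVert.ext_iff, copy_mk, pos_mk] at hw hwv
    omega
  have hle : C.ncard - 2 ≤ (C \ {v, p}).ncard := by
    rw [← Set.ncard_pair (a := v) (b := p) (by simp [caroVert.ext_iff, p]; omega)]
    exact Set.le_ncard_sdiff _ _
  by_cases hend : v.copy = 0 ∨ v.copy = m + 1
  · rw [if_pos hend] at hC
    exact (by omega : δ ≤ C.ncard - 2).trans (hle.trans (Set.ncard_le_ncard hsub))
  rw [if_neg hend] at hC
  obtain ⟨c, hvc, hc⟩ := caroGraph_exists_adj_copy_ne hδ (v := v) (by omega) (by tauto) (by tauto)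
  have hcC : c ∉ C \ {v, p} := fun h => hc h.1
  calc δ ≤ (C \ {v, p}).ncard + 1 := by omega
    _ = (insert c (C \ {v, p})).ncard := (Set.ncard_insert_of_notMem hcC).symm
    _ ≤ _ := Set.ncard_le_ncard (Set.insert_subset hvc hsub)

theorem caroGraph_ncard_neighborSet_start :
    ((caroGraph m δ).neighborSet start).ncard = δ := by
  set C := {w : caroVert m δ | w.copy = 0}
  let p : caroVert m δ := ⟨(⟨0, by omega⟩, ⟨1, by omega⟩), Or.inl rfl⟩
  have hp : p.copy = 0 ∧ p.pos = 1 := ⟨rfl, rfl⟩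
  have hN : (caroGraph m δ).neighborSet start = C \ {start, p} := by
    ext w
    simp only [mem_neighborSet, caroGraph_adj_iff, C, Set.mem_sdiff, Set.mem_ofPred_eq,
      Set.mem_insert_iff, Set.mem_singleton_iff, caroVert.ext_iff, copy_start, pos_start, hp]
    omega
  have hpair : {start, p} ⊆ C := Set.insert_subset copy_start (Set.singleton_subset_iff.mpr hp.1)
  have hC : C.ncard = δ + 2 := by simpa using ncard_copy (m := m) (δ := δ) (i := 0) (by omega)
  have hne : start ≠ p := by simp only [ne_eq, caroVert.ext_iff, copy_start, pos_start, hp]; omega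
  rw [hN, Set.ncard_sdiff hpair, hC, Set.ncard_pair hne]
  omega

end

theorem stmt_17_general (m δ : ℕ) (hδ : 3 ≤ δ) :
    Fintype.card (caroVert m δ) = (m + 2) * (δ + 1) + 2 ∧
    (caroGraph m δ).Connected ∧
    (∀ v : caroVert m δ, δ ≤ ((caroGraph m δ).neighborSet v).ncard) ∧
    (∃ v : caroVert m δ, ((caroGraph m δ).neighborSet v).ncard = δ) ∧
    ((caroGraph m δ).diam : ℝ) =
      3 * (((m + 2) * (δ + 1) + 2 : ℕ) : ℝ) / (δ + 1) - ((δ : ℝ) + 7) / (δ + 1) := by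
  refine ⟨card_caroVert, caroGraph_connected (by omega),
    caroGraph_le_ncard_neighborSet (by omega), ⟨start, caroGraph_ncard_neighborSet_start⟩, ?_⟩
  rw [caroGraph_diam (by omega)]
  field_simp
  push_cast
  ring

theorem stmt_17 (m δ : ℕ) (hm : 1 ≤ m) (hδ : 3 ≤ δ) :
    Fintype.card (caroVert m δ) = (m + 2) * (δ + 1) + 2 ∧
    (caroGraph m δ).Connected ∧
    (∀ v : caroVert m δ, δ ≤ ((caroGraph m δ).neighborSet v).ncard) ∧
    (∃ v : caroVert m δ, ((caroGraph m δ).neighborSet v).ncard = δ) ∧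
    ((caroGraph m δ).diam : ℝ) =
      3 * (((m + 2) * (δ + 1) + 2 : ℕ) : ℝ) / (δ + 1) - ((δ : ℝ) + 7) / (δ + 1) :=
  stmt_17_general m δ hδ
end
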